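/- arXiv:2506.19507 — 5 statements merged into one kernel-verified Lean document; each statement's English description precedes it below -/
import Mathlib

section
/- Let G = (V, E) be a finite tree (a connected acyclic simple graph) and let M be a matroid on the vertex set V of rank at least 1. Define I' = {X' ⊆ E : the vertex sets of the connected components of the graph G − X' (G with the edges of X' deleted) admit a transversal that is independent in M, i.e., there is an independent set of M containing exactly one vertex from each component}. Then I' is the family of independent sets of a matroid on E: ∅ ∈ I'; if Y' ∈ I' and X' ⊆ Y' then X' ∈ I'; and if X', Y' ∈ I' with |X'| < |Y'| then there exists an edge e ∈ Y' \ X' with X' + e ∈ I'. -/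
open Finset

variable {V : Type*} [Fintype V] [DecidableEq V]

/-- `X'` is a set of edges of `G` such that the connected components of `G - X'`
admit a transversal (a set containing exactly one vertex of each component)
that is independent in the matroid given by `Indep`. -/
def TreeCutIndep (Indep : Finset V → Prop) (G : SimpleGraph V)
    (X' : Finset (Sym2 V)) : Prop :=
  (X' : Set (Sym2 V)) ⊆ G.edgeSet ∧
  ∃ T : Finset V, Indep T ∧
    ∀ c : (G.deleteEdges (X' : Set (Sym2 V))).ConnectedComponent,
      ∃! v : V, v ∈ T ∧ (G.deleteEdges (X' : Set (Sym2 V))).connectedComponentMk v = c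

/-! For `X' ⊆ E` the graph `G - X'` is a forest with `|X'| + 1` components, so all transversals
of its components have `|X'| + 1` vertices and the exchange axiom of `M` applies to independent
transversals `TX`, `TY` of `G - X'`, `G - Y'`. It yields `v ∈ TY` with `TX + v` independent; let `u`
be the vertex of `TX` in the component of `v`. If the path from `v` to `u` in `G - X'` uses an edge
`e ∈ Y'`, then deleting `e` separates `v` from `u`, and `TX + v` is an independent transversal of
`G - (X' + e)`. Otherwise `v` and `u` are joined in `G - Y'`, so `u ∉ TY`, and trading `u` for `v`
gives an independent transversal of `G - X'` closer to `TY`; induct on `|TY \ TX|`. -/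

namespace SimpleGraph

section Transversal

variable {W : Type*} {H H' : SimpleGraph W} {T : Finset W} {t t' u v w : W}

def IsComponentTransversal (H : SimpleGraph W) (T : Finset W) : Prop :=
  ∀ c : H.ConnectedComponent, ∃! v : W, v ∈ T ∧ H.connectedComponentMk v = c

namespace IsComponentTransversal

theorem exists_reachable (hT : H.IsComponentTransversal T) (w : W) :
    ∃ t ∈ T, H.Reachable t w := by
  obtain ⟨t, ⟨ht, htw⟩, -⟩ := hT (H.connectedComponentMk w)
  exact ⟨t, ht, ConnectedComponent.exact htw⟩

theorem eq_of_reachable (hT : H.IsComponentTransversal T) (ht : t ∈ T) (ht' : t' ∈ T)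
    (h : H.Reachable t t') : t = t' :=
  (hT (H.connectedComponentMk t')).unique ⟨ht, ConnectedComponent.sound h⟩ ⟨ht', rfl⟩

theorem of_reachable (hcover : ∀ w, ∃ t ∈ T, H.Reachable t w)
    (hinj : ∀ t ∈ T, ∀ t' ∈ T, H.Reachable t t' → t = t') : H.IsComponentTransversal T := by
  intro c
  induction c using ConnectedComponent.ind with | h w
  obtain ⟨t, ht, htw⟩ := hcover w
  exact ⟨t, ⟨ht, ConnectedComponent.sound htw⟩, fun t' ⟨ht', ht'w⟩ =>
    hinj t' ht' t ht ((ConnectedComponent.exact ht'w).trans htw.symm)⟩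

theorem card_eq (hT : H.IsComponentTransversal T) : T.card = Nat.card H.ConnectedComponent := by
  rw [← Nat.card_eq_finsetCard]
  refine Nat.card_eq_of_bijective (fun t : T => H.connectedComponentMk t) ⟨?_, ?_⟩
  · rintro ⟨t, ht⟩ ⟨t', ht'⟩ h
    exact Subtype.ext (hT.eq_of_reachable ht ht' (ConnectedComponent.exact h))
  · intro c
    induction c using ConnectedComponent.ind with | h w
    obtain ⟨t, ht, htw⟩ := hT.exists_reachable w
    exact ⟨⟨t, ht⟩, ConnectedComponent.sound htw⟩

theorem singleton (hH : H.Connected) (v : W) : H.IsComponentTransversal {v} :=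
  of_reachable (fun w => ⟨v, mem_singleton_self v, hH.preconnected v w⟩)
    (fun _ ht _ ht' _ => (mem_singleton.mp ht).trans (mem_singleton.mp ht').symm)

theorem exists_subset_of_le [DecidableEq W] (hT : H.IsComponentTransversal T) (hle : H ≤ H') :
    ∃ S ⊆ T, H'.IsComponentTransversal S := by
  have hcover (c : H'.ConnectedComponent) : ∃ t ∈ T, H'.connectedComponentMk t = c := by
    induction c using ConnectedComponent.ind with | h w
    obtain ⟨t, ht, htw⟩ := hT.exists_reachable w
    exact ⟨t, ht, ConnectedComponent.sound (htw.mono hle)⟩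
  choose pick hpick hmk using hcover
  refine ⟨T.filter fun t => pick (H'.connectedComponentMk t) = t, filter_subset _ _,
    of_reachable (fun w => ⟨pick (H'.connectedComponentMk w), ?_, ?_⟩) ?_⟩
  · exact mem_filter.mpr ⟨hpick _, by rw [hmk]⟩
  · exact ConnectedComponent.exact (hmk _)
  · intro t ht t' ht' h
    rw [← (mem_filter.mp ht).2, ← (mem_filter.mp ht').2, ConnectedComponent.sound h]

theorem insert_erase [DecidableEq W] (hT : H.IsComponentTransversal T) (hu : u ∈ T)
    (hvu : H.Reachable v u) : H.IsComponentTransversal (insert v (T.erase u)) := by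
  have hsep : ∀ t ∈ T.erase u, ¬ H.Reachable v t := fun t ht hvt =>
    (mem_erase.mp ht).1 (hT.eq_of_reachable (mem_erase.mp ht).2 hu (hvt.symm.trans hvu))
  refine of_reachable (fun w => ?_) (fun t ht t' ht' h => ?_)
  · obtain ⟨t, ht, htw⟩ := hT.exists_reachable w
    by_cases htu : t = u
    · exact ⟨v, mem_insert_self v _, hvu.trans (htu ▸ htw)⟩
    · exact ⟨t, mem_insert_of_mem (mem_erase.mpr ⟨htu, ht⟩), htw⟩
  · rcases mem_insert.mp ht with rfl | hte <;> rcases mem_insert.mp ht' with rfl | hte'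
    · rfl
    · exact absurd h (hsep t' hte')
    · exact absurd h.symm (hsep t hte)
    · exact hT.eq_of_reachable (mem_of_mem_erase hte) (mem_of_mem_erase hte') h

end IsComponentTransversal

theorem exists_isComponentTransversal [Fintype W] [DecidableEq W]
    (H : SimpleGraph W) : ∃ T, H.IsComponentTransversal T := by
  have hbot : (⊥ : SimpleGraph W).IsComponentTransversal univ :=
    .of_reachable (fun w => ⟨w, mem_univ w, .rfl⟩) (fun _ _ _ _ => reachable_bot.mp)
  obtain ⟨T, -, hT⟩ := hbot.exists_subset_of_le bot_le
  exact ⟨T, hT⟩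

end Transversal

section DeleteEdges

variable {W : Type*} {H : SimpleGraph W} {T : Finset W} {a b t u v w x y : W} {e : Sym2 W}

theorem Reachable.deleteEdges_singleton_or (h : H.Reachable a b) :
    (H.deleteEdges {s(x, y)}).Reachable a b ∨ (H.deleteEdges {s(x, y)}).Reachable a x ∨
      (H.deleteEdges {s(x, y)}).Reachable a y := by
  obtain ⟨p⟩ := h
  induction p with
  | nil => exact .inl .rfl
  | @cons a c _ hac p ih =>
    by_cases he : s(a, c) = s(x, y)
    · rcases Sym2.eq_iff.mp he with ⟨rfl, -⟩ | ⟨rfl, -⟩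
      · exact .inr (.inl .rfl)
      · exact .inr (.inr .rfl)
    · have hac' : (H.deleteEdges {s(x, y)}).Reachable a c :=
        Adj.reachable (by simp [hac, he])
      exact ih.imp hac'.trans (Or.imp hac'.trans hac'.trans)

theorem Reachable.deleteEdges_singleton_or_of_not_reachable (hwt : H.Reachable w t)
    (hvu : H.Reachable v u) (hsep : ¬ (H.deleteEdges {e}).Reachable v u) :
    (H.deleteEdges {e}).Reachable w t ∨ (H.deleteEdges {e}).Reachable w v ∨
      (H.deleteEdges {e}).Reachable w u := by
  induction e with | h x y
  have hw := hwt.deleteEdges_singleton_or (x := x) (y := y)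
  have hv := hvu.deleteEdges_singleton_or (x := x) (y := y)
  have hu := hvu.symm.deleteEdges_singleton_or (x := x) (y := y)
  -- `v` lies on one side of the deleted edge `xy` and `u` on the other
  simp only [← ConnectedComponent.eq] at *
  grind

theorem deleteEdges_insert (s : Set (Sym2 W)) (e : Sym2 W) :
    H.deleteEdges (insert e s) = (H.deleteEdges s).deleteEdges {e} := by
  rw [deleteEdges_deleteEdges, Set.union_singleton]

theorem IsComponentTransversal.insert_deleteEdges [DecidableEq W]
    (hT : H.IsComponentTransversal T) (hu : u ∈ T) (hvu : H.Reachable v u)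
    (hsep : ¬ (H.deleteEdges {e}).Reachable v u) :
    (H.deleteEdges {e}).IsComponentTransversal (insert v T) := by
  have hvT : ∀ t ∈ T, ¬ (H.deleteEdges {e}).Reachable v t := fun t ht hvt =>
    hsep (hT.eq_of_reachable ht hu ((hvt.mono (deleteEdges_le _)).symm.trans hvu) ▸ hvt)
  refine .of_reachable (fun w => ?_) (fun t ht t' ht' h => ?_)
  · obtain ⟨t, ht, htw⟩ := hT.exists_reachable w
    rcases htw.symm.deleteEdges_singleton_or_of_not_reachable hvu hsep with hwt | hwv | hwu
    · exact ⟨t, mem_insert_of_mem ht, hwt.symm⟩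
    · exact ⟨v, mem_insert_self v T, hwv.symm⟩
    · exact ⟨u, mem_insert_of_mem hu, hwu.symm⟩
  · rcases mem_insert.mp ht with rfl | htT <;> rcases mem_insert.mp ht' with rfl | htT'
    · rfl
    · exact absurd h (hvT t' htT')
    · exact absurd h.symm (hvT t htT)
    · exact hT.eq_of_reachable htT htT' (h.mono (deleteEdges_le _))

theorem card_connectedComponent_deleteEdges_singleton [Fintype W] [DecidableEq W]
    (hvu : H.Reachable v u) (hsep : ¬ (H.deleteEdges {e}).Reachable v u) :
    Nat.card (H.deleteEdges {e}).ConnectedComponent = Nat.card H.ConnectedComponent + 1 := by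
  obtain ⟨T₀, hT₀⟩ := H.exists_isComponentTransversal
  obtain ⟨t, ht, htu⟩ := hT₀.exists_reachable u
  have hT := hT₀.insert_erase ht htu.symm
  have hvT : v ∉ insert u (T₀.erase t) := fun hv =>
    hsep (hT.eq_of_reachable hv (mem_insert_self u _) hvu ▸ .rfl)
  rw [← (hT.insert_deleteEdges (mem_insert_self u _) hvu hsep).card_eq, ← hT.card_eq,
    card_insert_of_notMem hvT]

theorem IsAcyclic.card_connectedComponent_deleteEdges [Fintype W] [DecidableEq W]
    (hH : H.IsAcyclic) {X : Finset (Sym2 W)} (hX : (X : Set (Sym2 W)) ⊆ H.edgeSet) :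
    Nat.card (H.deleteEdges X).ConnectedComponent = Nat.card H.ConnectedComponent + X.card := by
  induction X using Finset.induction_on with
  | empty => simp
  | @insert e S heS ih =>
    rw [coe_insert, Set.insert_subset_iff] at hX
    have hbridge : (H.deleteEdges S).IsBridge e :=
      isAcyclic_iff_forall_isBridge.mp (hH.anti (deleteEdges_le _)) (by simp [hX.1, heS])
    induction e with | h x y
    have hxy : (H.deleteEdges S).Reachable x y := Adj.reachable (by simp_all)
    rw [coe_insert, deleteEdges_insert,
      card_connectedComponent_deleteEdges_singleton hxy (isBridge_iff.mp hbridge), ih hX.2,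
      card_insert_of_notMem heS, add_assoc]

theorem IsAcyclic.exists_not_reachable_deleteEdges_singleton [DecidableEq W] (hH : H.IsAcyclic)
    (huv : H.Reachable u v) {s : Set (Sym2 W)} (hs : ¬ (H.deleteEdges s).Reachable u v) :
    ∃ e ∈ s, ¬ (H.deleteEdges {e}).Reachable u v := by
  obtain ⟨p, hp⟩ := huv.exists_isPath
  obtain ⟨e, hes, hep⟩ := p.exists_mem_edges_of_not_reachable_deleteEdges hs
  refine ⟨e, hes, fun hdel => ?_⟩
  induction e with | h x y
  obtain ⟨q, hq⟩ := reachable_deleteEdges_iff_exists_walk.mp hdel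
  -- in a forest `p` is the only path from `u` to `v`, so it is the shortcut of `q`
  have hpq : p = q.bypass :=
    congrArg Subtype.val ((hH.subsingleton_path u v).elim ⟨p, hp⟩ q.toPath)
  exact hq (q.edges_bypass_subset_edges (hpq ▸ hep))

theorem IsTree.card_eq_of_isComponentTransversal_deleteEdges [Fintype W] [DecidableEq W]
    (hH : H.IsTree) {X : Finset (Sym2 W)} (hX : (X : Set (Sym2 W)) ⊆ H.edgeSet)
    (hT : (H.deleteEdges X).IsComponentTransversal T) : T.card = X.card + 1 := by
  have : Nonempty W := hH.connected.nonempty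
  have hone : Nat.card H.ConnectedComponent = 1 := Nat.card_eq_one_iff_unique.mpr
    ⟨hH.connected.preconnected.subsingleton_connectedComponent, inferInstance⟩
  rw [hT.card_eq, hH.isAcyclic.card_connectedComponent_deleteEdges hX, hone, add_comm]

end DeleteEdges

end SimpleGraph

namespace TreeCutIndep

open SimpleGraph

variable {W : Type*} {Indep : Finset W → Prop} {G : SimpleGraph W} {X' Y' : Finset (Sym2 W)}
  {T : Finset W} {u v : W} {e : Sym2 W}

theorem empty_of_connected (hG : G.Connected) (hv : Indep {v}) : TreeCutIndep Indep G ∅ :=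
  ⟨by simp, {v}, hv, by
    rw [coe_empty, deleteEdges_empty]
    exact IsComponentTransversal.singleton hG v⟩

theorem anti [DecidableEq W] (h_subset : ∀ ⦃I J : Finset W⦄, Indep J → I ⊆ J → Indep I)
    (hY : TreeCutIndep Indep G Y') (hXY : X' ⊆ Y') : TreeCutIndep Indep G X' := by
  obtain ⟨hYE, T, hIT, hT : (G.deleteEdges Y').IsComponentTransversal T⟩ := hY
  obtain ⟨S, hST, hS⟩ := hT.exists_subset_of_le (deleteEdges_anti (coe_subset.mpr hXY))
  exact ⟨(coe_subset.mpr hXY).trans hYE, S, h_subset hIT hST, hS⟩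

theorem insert_of_not_reachable [DecidableEq W] (hX : (X' : Set (Sym2 W)) ⊆ G.edgeSet)
    (hT : (G.deleteEdges X').IsComponentTransversal T) (hI : Indep (insert v T)) (hu : u ∈ T)
    (hvu : (G.deleteEdges X').Reachable v u)
    (hsep : ¬ ((G.deleteEdges X').deleteEdges {e}).Reachable v u) :
    e ∉ X' ∧ TreeCutIndep Indep G (insert e X') := by
  have he : e ∈ (G.deleteEdges X').edgeSet := by
    by_contra he
    rw [deleteEdges_eq_self.mpr (Set.disjoint_singleton_right.mpr he)] at hsep
    exact hsep hvu
  rw [edgeSet_deleteEdges] at he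
  refine ⟨he.2, ?_, insert v T, hI, ?_⟩
  · rw [coe_insert]
    exact Set.insert_subset he.1 hX
  · rw [coe_insert, deleteEdges_insert]
    exact hT.insert_deleteEdges hu hvu hsep

theorem exists_insert_of_card_lt [DecidableEq W]
    (h_subset : ∀ ⦃I J : Finset W⦄, Indep J → I ⊆ J → Indep I)
    (h_exchange : ∀ ⦃I J : Finset W⦄, Indep I → Indep J → I.card < J.card →
      ∃ e ∈ J \ I, Indep (insert e I))
    (hG : G.IsAcyclic) (hX : (X' : Set (Sym2 W)) ⊆ G.edgeSet) {TX TY : Finset W}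
    (hTX : (G.deleteEdges X').IsComponentTransversal TX) (hIX : Indep TX)
    (hTY : (G.deleteEdges Y').IsComponentTransversal TY) (hIY : Indep TY)
    (hcard : TX.card < TY.card) : ∃ e ∈ Y' \ X', TreeCutIndep Indep G (insert e X') := by
  induction hn : (TY \ TX).card using Nat.strong_induction_on generalizing TX with
  | _ n ih =>
  obtain ⟨v, hv, hIv⟩ := h_exchange hIX hIY hcard
  obtain ⟨hvY, hvX⟩ := mem_sdiff.mp hv
  obtain ⟨u, hu, huv⟩ := hTX.exists_reachable v
  by_cases hYsep : ((G.deleteEdges X').deleteEdges Y').Reachable v u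
  · have hle : (G.deleteEdges X').deleteEdges Y' ≤ G.deleteEdges Y' := by
      rw [deleteEdges_deleteEdges]; exact deleteEdges_anti Set.subset_union_right
    have huY : u ∉ TY := fun huY => hvX (hTY.eq_of_reachable hvY huY (hYsep.mono hle) ▸ hu)
    have hvu : v ∉ TX.erase u := fun h => hvX (mem_of_mem_erase h)
    refine ih _ ?_ (hTX.insert_erase hu huv.symm)
      (h_subset hIv (insert_subset_insert _ (erase_subset _ _))) ?_ rfl
    · rw [← hn]
      refine card_lt_card ((ssubset_iff_of_subset ?_).mpr ⟨v, hv, by simp⟩)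
      intro z hz
      simp only [mem_sdiff, mem_insert, mem_erase, not_or, not_and] at hz ⊢
      exact ⟨hz.1, fun hzX => hz.2.2 (fun hzu => huY (hzu ▸ hz.1)) hzX⟩
    · rwa [card_insert_of_notMem hvu, card_erase_add_one hu]
  · obtain ⟨e, heY, hsep⟩ :=
      (hG.anti (deleteEdges_le _)).exists_not_reachable_deleteEdges_singleton huv.symm hYsep
    obtain ⟨heX, hins⟩ := insert_of_not_reachable hX hTX hIv hu huv.symm hsep
    exact ⟨e, mem_sdiff.mpr ⟨heY, heX⟩, hins⟩

end TreeCutIndep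

theorem treeCutIndep_is_matroid_general
    (G : SimpleGraph V) (hG : G.IsTree)
    (Indep : Finset V → Prop)
    (h_subset : ∀ ⦃I J : Finset V⦄, Indep J → I ⊆ J → Indep I)
    (h_exchange : ∀ ⦃I J : Finset V⦄, Indep I → Indep J → I.card < J.card →
      ∃ e ∈ J \ I, Indep (insert e I))
    (h_rank_pos : ∃ v : V, Indep {v}) :
    TreeCutIndep Indep G ∅ ∧
    (∀ X' Y' : Finset (Sym2 V), TreeCutIndep Indep G Y' → X' ⊆ Y' →
      TreeCutIndep Indep G X') ∧
    (∀ X' Y' : Finset (Sym2 V), TreeCutIndep Indep G X' → TreeCutIndep Indep G Y' →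
      X'.card < Y'.card → ∃ e ∈ Y' \ X', TreeCutIndep Indep G (insert e X')) := by
  obtain ⟨v, hv⟩ := h_rank_pos
  refine ⟨.empty_of_connected hG.connected hv, fun X' Y' hY hXY => hY.anti h_subset hXY, ?_⟩
  rintro X' Y' ⟨hX, TX, hIX, hTX⟩ ⟨hY, TY, hIY, hTY⟩ hcard
  refine TreeCutIndep.exists_insert_of_card_lt h_subset h_exchange hG.isAcyclic hX hTX hIX hTY
    hIY ?_
  rw [hG.card_eq_of_isComponentTransversal_deleteEdges hX hTX,
    hG.card_eq_of_isComponentTransversal_deleteEdges hY hTY]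
  omega

/-- for a finite tree `G` and a matroid on its vertices of rank at least `1`,
the family `I'` of edge sets whose removal yields components admitting an independent
transversal satisfies the three independence axioms of a matroid. -/
theorem treeCutIndep_is_matroid
    (G : SimpleGraph V) (hG : G.IsTree)
    (Indep : Finset V → Prop)
    (h_empty : Indep ∅)
    (h_subset : ∀ ⦃I J : Finset V⦄, Indep J → I ⊆ J → Indep I)
    (h_exchange : ∀ ⦃I J : Finset V⦄, Indep I → Indep J → I.card < J.card →
      ∃ e ∈ J \ I, Indep (insert e I))
    (h_rank_pos : ∃ v : V, Indep {v}) :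
    TreeCutIndep Indep G ∅ ∧
    (∀ X' Y' : Finset (Sym2 V), TreeCutIndep Indep G Y' → X' ⊆ Y' →
      TreeCutIndep Indep G X') ∧
    (∀ X' Y' : Finset (Sym2 V), TreeCutIndep Indep G X' → TreeCutIndep Indep G Y' →
      X'.card < Y'.card → ∃ e ∈ Y' \ X', TreeCutIndep Indep G (insert e X')) :=
  treeCutIndep_is_matroid_general G hG Indep h_subset h_exchange h_rank_pos
end

section
/- Let G = (V, E) be a finite connected simple graph with edge weights w : E → ℝ≥0, and let M be a matroid on V of rank k ≥ 1 such that at least one feasible partition exists. Then among the feasible partitions P minimizing the cost Σ_{X ∈ P} d_w(X), there exists one in which the induced subgraph G[X] is connected for every class X ∈ P. -/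
open Finset

variable {V : Type*} [Fintype V] [DecidableEq V]

/-- `P` is a partition of the finite vertex set into nonempty parts. -/
def IsPartition (P : Finset (Finset V)) : Prop :=
  (∀ X ∈ P, X.Nonempty) ∧
  (∀ X ∈ P, ∀ Y ∈ P, X ≠ Y → Disjoint X Y) ∧
  P.sup id = Finset.univ

/-- `P` is a feasible partition for the rank-`k` matroid given by `Indep`:
there is a basis `B` (an independent set of size `k`) with exactly one element
in each class of `P`. -/
def Feasible (Indep : Finset V → Prop) (k : ℕ) (P : Finset (Finset V)) : Prop :=
  IsPartition P ∧ ∃ B : Finset V, Indep B ∧ B.card = k ∧ ∀ X ∈ P, (B ∩ X).card = 1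

/-- `d_w(X)`: the total weight of edges of `G` with exactly one endpoint in `X`. -/
noncomputable def cutWeight (G : SimpleGraph V) [DecidableRel G.Adj] (w : Sym2 V → ℝ)
    (X : Finset V) : ℝ :=
  ∑ e ∈ G.edgeFinset, if ∃ u v : V, e = s(u, v) ∧ u ∈ X ∧ v ∉ X then w e else 0

/-! Among the minimum-cost feasible partitions take one with the most ordered pairs of adjacent
vertices inside a class. If some class `X` induced a disconnected subgraph, let `b` be the basis
element in `X` and `C` a component of `G[X]` avoiding `b`. Since `G` is connected, `C` has a
neighbour in another class `Y`. Moving `C` from `X` to `Y` keeps the same basis transversal, does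
not increase the cost because no edge joins `C` to `X \ C`, and creates a new inner adjacent pair,
a contradiction. -/

theorem Finset.exists_min_image_max_image {ι β γ : Type*} [LinearOrder β] [LinearOrder γ]
    (s : Finset ι) (f : ι → β) (g : ι → γ) (hs : s.Nonempty) :
    ∃ a ∈ s, (∀ b ∈ s, f a ≤ f b) ∧ ∀ b ∈ s, f b ≤ f a → g b ≤ g a := by
  classical
  obtain ⟨a₀, ha₀, hmin⟩ := s.exists_min_image f hs
  obtain ⟨a, ha, hmax⟩ :=
    (s.filter fun a => f a = f a₀).exists_max_image g ⟨a₀, mem_filter.2 ⟨ha₀, rfl⟩⟩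
  obtain ⟨has, hfa⟩ := mem_filter.1 ha
  refine ⟨a, has, fun b hb => hfa ▸ hmin b hb, fun b hb hba => hmax b (mem_filter.2 ⟨hb, ?_⟩)⟩
  exact le_antisymm (hfa ▸ hba) (hmin b hb)

theorem Finset.insert_insert_erase_erase {ι : Type*} [DecidableEq ι] {s : Finset ι} {a b : ι}
    (ha : a ∈ s) (hb : b ∈ s) (hab : a ≠ b) : insert a (insert b ((s.erase a).erase b)) = s := by
  rw [insert_erase (mem_erase.2 ⟨hab.symm, hb⟩), insert_erase ha]

theorem Finset.inter_sdiff_eq_inter_of_disjoint {ι : Type*} [DecidableEq ι] {s t u : Finset ι}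
    (h : Disjoint s u) : s ∩ (t \ u) = s ∩ t := by
  rw [← inter_sdiff_assoc, sdiff_eq_self_of_disjoint (disjoint_of_subset_left inter_subset_left h)]

theorem Finset.inter_union_eq_inter_of_disjoint {ι : Type*} [DecidableEq ι] {s t u : Finset ι}
    (h : Disjoint s u) : s ∩ (t ∪ u) = s ∩ t := by
  rw [inter_union_distrib_left, disjoint_iff_inter_eq_empty.1 h, union_empty]

theorem Finset.disjoint_sdiff_union_of_disjoint {ι : Type*} [DecidableEq ι] {s t u : Finset ι}
    (h : Disjoint s t) : Disjoint (s \ u) (t ∪ u) :=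
  disjoint_union_right.2 ⟨disjoint_of_subset_left sdiff_subset h, sdiff_disjoint⟩

theorem Finset.sdiff_union_union_of_subset {ι : Type*} [DecidableEq ι] {s t u : Finset ι}
    (h : u ⊆ s) : s \ u ∪ (t ∪ u) = s ∪ t := by
  rw [union_comm t, ← union_assoc, sdiff_union_of_subset h]

section Graph

variable {α : Type*} {G : SimpleGraph α}

theorem SimpleGraph.Connected.exists_adj_mem_notMem (hG : G.Connected) {S : Set α} {a b : α}
    (ha : a ∈ S) (hb : b ∉ S) : ∃ u ∈ S, ∃ v ∉ S, G.Adj u v := by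
  obtain ⟨d, -, hd₁, hd₂⟩ := (hG.preconnected a b).some.exists_boundary_dart S ha hb
  exact ⟨d.fst, hd₁, d.snd, hd₂, d.adj⟩

theorem exists_closed_subset_of_not_connected {X : Finset α} {b : α} (hb : b ∈ X)
    (hX : ¬(G.induce (X : Set α)).Connected) :
    ∃ C ⊆ X, C.Nonempty ∧ b ∉ C ∧ ∀ p ∈ C, ∀ q ∈ X, G.Adj p q → q ∈ C := by
  classical
  rw [SimpleGraph.connected_iff_exists_forall_reachable] at hX
  obtain ⟨a, hba⟩ := not_forall.1 (not_exists.1 hX ⟨b, hb⟩)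
  refine ⟨X.filter fun q => ∃ hq : q ∈ X, (G.induce (X : Set α)).Reachable a ⟨q, hq⟩,
    filter_subset _ _, ⟨a, mem_filter.2 ⟨a.2, a.2, .refl _⟩⟩, ?_, ?_⟩
  · rintro hbC
    obtain ⟨-, _, hab⟩ := mem_filter.1 hbC
    exact hba hab.symm
  · intro p hp q hq hpq
    obtain ⟨-, _, hap⟩ := mem_filter.1 hp
    exact mem_filter.2 ⟨hq, hq, hap.trans (SimpleGraph.Adj.reachable (G := G.induce _) hpq)⟩

def adjPairsIn (G : SimpleGraph α) [DecidableRel G.Adj] (S : Finset α) : Finset (α × α) :=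
  (S ×ˢ S).filter fun p => G.Adj p.1 p.2

variable [DecidableRel G.Adj]

theorem card_adjPairsIn_le_of_closed [DecidableEq α] {C X : Finset α}
    (hC : ∀ p ∈ C, ∀ q ∈ X, G.Adj p q → q ∈ C) :
    #(adjPairsIn G X) ≤ #(adjPairsIn G C) + #(adjPairsIn G (X \ C)) := by
  refine (card_le_card fun p hp => ?_).trans (card_union_le _ _)
  simp only [adjPairsIn, mem_union, mem_filter, mem_product, mem_sdiff] at hp ⊢
  have := hC p.1; have := hC p.2
  grind [hp.2.symm]

theorem card_adjPairsIn_add_lt_of_adj [DecidableEq α] {C Y : Finset α} (hYC : Disjoint Y C)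
    {c v : α} (hc : c ∈ C) (hv : v ∈ Y) (hcv : G.Adj c v) :
    #(adjPairsIn G Y) + #(adjPairsIn G C) < #(adjPairsIn G (Y ∪ C)) := by
  have hdisj : Disjoint (adjPairsIn G Y) (adjPairsIn G C) :=
    disjoint_filter_filter (disjoint_product.2 (Or.inl hYC))
  have hcv_notMem : (c, v) ∉ adjPairsIn G Y ∪ adjPairsIn G C := by
    simp only [adjPairsIn, mem_union, mem_filter, mem_product]
    rintro (⟨⟨hcY, -⟩, -⟩ | ⟨⟨-, hvC⟩, -⟩)
    · exact disjoint_right.1 hYC hc hcY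
    · exact disjoint_left.1 hYC hv hvC
  calc #(adjPairsIn G Y) + #(adjPairsIn G C)
      < #(insert (c, v) (adjPairsIn G Y ∪ adjPairsIn G C)) := by
        rw [card_insert_of_notMem hcv_notMem, card_union_of_disjoint hdisj]; omega
    _ ≤ #(adjPairsIn G (Y ∪ C)) := card_le_card <| by
        intro p hp
        simp only [adjPairsIn, mem_insert, mem_union, mem_filter, mem_product] at hp ⊢
        grind

end Graph

theorem exists_mk_eq_mk_mem_notMem_iff {α : Type*} (X : Finset α) (u v : α) :
    (∃ a b : α, s(u, v) = s(a, b) ∧ a ∈ X ∧ b ∉ X) ↔ ¬(u ∈ X ↔ v ∈ X) := by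
  constructor
  · rintro ⟨a, b, hab, ha, hb⟩
    rcases Sym2.eq_iff.1 hab with ⟨rfl, rfl⟩ | ⟨rfl, rfl⟩ <;> tauto
  · intro h
    by_cases hu : u ∈ X
    · exact ⟨u, v, rfl, hu, by tauto⟩
    · exact ⟨v, u, Sym2.eq_swap, by tauto, hu⟩

theorem cutWeight_sdiff_add_cutWeight_union_le (G : SimpleGraph V) [DecidableRel G.Adj]
    {w : Sym2 V → ℝ} (hw : ∀ e, 0 ≤ w e) {C X Y : Finset V} (hCX : C ⊆ X)
    (hXY : Disjoint X Y) (hC : ∀ p ∈ C, ∀ q ∈ X, G.Adj p q → q ∈ C) :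
    cutWeight G w (X \ C) + cutWeight G w (Y ∪ C) ≤ cutWeight G w X + cutWeight G w Y := by
  simp only [cutWeight, ← sum_add_distrib]
  refine sum_le_sum fun e he => ?_
  induction e using Sym2.ind with | _ u v => ?_
  have huv : G.Adj u v := by simpa using he
  have hu : u ∈ C → u ∈ X := @hCX u
  have hv : v ∈ C → v ∈ X := @hCX v
  have hCu : u ∈ C → v ∈ X → v ∈ C := fun hu hv => hC u hu v hv huv
  have hCv : v ∈ C → u ∈ X → u ∈ C := fun hv hu => hC v hv u hu huv.symm
  have hXu : u ∈ X → u ∉ Y := fun h => disjoint_left.1 hXY h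
  have hXv : v ∈ X → v ∉ Y := fun h => disjoint_left.1 hXY h
  have := hw s(u, v)
  simp only [exists_mk_eq_mk_mem_notMem_iff]
  simp only [mem_sdiff, mem_union]
  split_ifs <;> grind

def replaceParts (P : Finset (Finset V)) (X Y X' Y' : Finset V) : Finset (Finset V) :=
  insert X' (insert Y' ((P.erase X).erase Y))

namespace IsPartition

variable {P : Finset (Finset V)} {X Y X' Y' : Finset V}

theorem exists_mem (hP : IsPartition P) (v : V) : ∃ Y ∈ P, v ∈ Y :=
  mem_sup.1 (hP.2.2 ▸ mem_univ v)

theorem disjoint_union_of_mem_erase_erase (hP : IsPartition P) (hX : X ∈ P) (hY : Y ∈ P)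
    {Z : Finset V} (hZ : Z ∈ (P.erase X).erase Y) : Disjoint Z (X ∪ Y) := by
  obtain ⟨hZY, hZX, hZP⟩ : Z ≠ Y ∧ Z ≠ X ∧ Z ∈ P := by simpa only [mem_erase] using hZ
  exact disjoint_union_right.2 ⟨hP.2.1 Z hZP X hX hZX, hP.2.1 Z hZP Y hY hZY⟩

theorem notMem_erase_erase (hP : IsPartition P) (hX : X ∈ P) (hY : Y ∈ P) {S : Finset V}
    (hS : S.Nonempty) (hSXY : S ⊆ X ∪ Y) : S ∉ (P.erase X).erase Y := fun h =>
  hS.ne_empty <| disjoint_self.1 <|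
    disjoint_of_subset_right hSXY (hP.disjoint_union_of_mem_erase_erase hX hY h)

theorem sum_replaceParts_add (hP : IsPartition P) (hX : X ∈ P) (hY : Y ∈ P) (hXY : X ≠ Y)
    (hX' : X'.Nonempty) (hY' : Y'.Nonempty) (hX'Y' : Disjoint X' Y') (hunion : X' ∪ Y' = X ∪ Y)
    {M : Type*} [AddCommMonoid M] (f : Finset V → M) :
    ∑ Z ∈ replaceParts P X Y X' Y', f Z + (f X + f Y) = ∑ Z ∈ P, f Z + (f X' + f Y') := by
  have hY'R := hP.notMem_erase_erase hX hY hY' (hunion ▸ subset_union_right)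
  have hX'R : X' ∉ insert Y' ((P.erase X).erase Y) := by
    refine mem_insert.not.2 (not_or.2 ⟨?_, ?_⟩)
    · rintro rfl
      exact hX'.ne_empty (disjoint_self.1 hX'Y')
    · exact hP.notMem_erase_erase hX hY hX' (hunion ▸ subset_union_left)
  conv_rhs => rw [← insert_insert_erase_erase hX hY hXY]
  rw [replaceParts, sum_insert hX'R, sum_insert hY'R, sum_insert (by simp [hXY]),
    sum_insert (by simp)]
  abel

theorem replaceParts (hP : IsPartition P) (hX : X ∈ P) (hY : Y ∈ P) (hXY : X ≠ Y)
    (hX' : X'.Nonempty) (hY' : Y'.Nonempty) (hX'Y' : Disjoint X' Y') (hunion : X' ∪ Y' = X ∪ Y) :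
    IsPartition (replaceParts P X Y X' Y') := by
  have hR := fun Z hZ => hP.disjoint_union_of_mem_erase_erase hX hY (Z := Z) hZ
  refine ⟨?_, ?_, ?_⟩
  · intro Z hZ
    rcases mem_insert.1 hZ with rfl | hZ
    · exact hX'
    rcases mem_insert.1 hZ with rfl | hZ
    · exact hY'
    exact hP.1 Z (mem_of_mem_erase (mem_of_mem_erase hZ))
  · have hRdisj : (↑((P.erase X).erase Y) : Set (Finset V)).PairwiseDisjoint id :=
      fun Z hZ W hW => hP.2.1 Z (mem_of_mem_erase (mem_of_mem_erase hZ))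
        W (mem_of_mem_erase (mem_of_mem_erase hW))
    have hdisj := (hRdisj.insert (i := Y') fun Z hZ _ =>
        disjoint_of_subset_left (hunion ▸ subset_union_right) (hR Z hZ).symm).insert (i := X')
      fun Z hZ _ => by
        rcases Set.mem_insert_iff.1 hZ with rfl | hZ
        · exact hX'Y'
        · exact disjoint_of_subset_left (hunion ▸ subset_union_left) (hR Z hZ).symm
    rw [← coe_insert, ← coe_insert] at hdisj
    exact fun Z hZ W hW => hdisj hZ hW
  · conv_rhs => rw [← hP.2.2, ← insert_insert_erase_erase hX hY hXY]
    simp only [_root_.replaceParts, sup_insert, ← sup_assoc, id]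
    exact congrArg (· ⊔ _) hunion

variable {C : Finset V}

theorem replaceParts_sdiff_union (hP : IsPartition P) (hX : X ∈ P) (hY : Y ∈ P) (hXY : X ≠ Y)
    (hCX : C ⊆ X) (hXC : (X \ C).Nonempty) :
    IsPartition (_root_.replaceParts P X Y (X \ C) (Y ∪ C)) :=
  hP.replaceParts hX hY hXY hXC ((hP.1 Y hY).mono subset_union_left)
    (disjoint_sdiff_union_of_disjoint (hP.2.1 X hX Y hY hXY)) (sdiff_union_union_of_subset hCX)

theorem sum_replaceParts_sdiff_union_add (hP : IsPartition P) (hX : X ∈ P) (hY : Y ∈ P)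
    (hXY : X ≠ Y) (hCX : C ⊆ X) (hXC : (X \ C).Nonempty) {M : Type*} [AddCommMonoid M]
    (f : Finset V → M) :
    ∑ Z ∈ _root_.replaceParts P X Y (X \ C) (Y ∪ C), f Z + (f X + f Y) =
      ∑ Z ∈ P, f Z + (f (X \ C) + f (Y ∪ C)) :=
  hP.sum_replaceParts_add hX hY hXY hXC ((hP.1 Y hY).mono subset_union_left)
    (disjoint_sdiff_union_of_disjoint (hP.2.1 X hX Y hY hXY)) (sdiff_union_union_of_subset hCX) f

end IsPartition

noncomputable def partitionCost (G : SimpleGraph V) [DecidableRel G.Adj] (w : Sym2 V → ℝ)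
    (P : Finset (Finset V)) : ℝ :=
  ∑ X ∈ P, cutWeight G w X

def innerAdjPairs (G : SimpleGraph V) [DecidableRel G.Adj] (P : Finset (Finset V)) : ℕ :=
  ∑ X ∈ P, #(adjPairsIn G X)

theorem Feasible.exists_partitionCost_le_innerAdjPairs_lt {G : SimpleGraph V} [DecidableRel G.Adj]
    (hG : G.Connected) {w : Sym2 V → ℝ} (hw : ∀ e, 0 ≤ w e) {Indep : Finset V → Prop} {k : ℕ}
    {P : Finset (Finset V)} (hP : Feasible Indep k P) {X : Finset V} (hX : X ∈ P)
    (hXconn : ¬(G.induce (X : Set V)).Connected) :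
    ∃ P', Feasible Indep k P' ∧ partitionCost G w P' ≤ partitionCost G w P ∧
      innerAdjPairs G P < innerAdjPairs G P' := by
  obtain ⟨hPpart, B, hB, hBk, hBP⟩ := hP
  obtain ⟨b, hb⟩ := card_eq_one.1 (hBP X hX)
  obtain ⟨hbB, hbX⟩ := mem_inter.1 (hb ▸ mem_singleton_self b)
  obtain ⟨C, hCX, ⟨a, ha⟩, hbC, hC⟩ := exists_closed_subset_of_not_connected hbX hXconn
  obtain ⟨c, hc, v, hvC, hcv⟩ := hG.exists_adj_mem_notMem (S := (C : Set V)) ha hbC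
  have hvX : v ∉ X := fun h => hvC (hC c hc v h hcv)
  obtain ⟨Y, hY, hvY⟩ := hPpart.exists_mem v
  have hXY : X ≠ Y := by rintro rfl; exact hvX hvY
  have hdisj : Disjoint X Y := hPpart.2.1 X hX Y hY hXY
  have hBC : Disjoint B C := disjoint_left.2 fun x hxB hxC => by
    have : x ∈ B ∩ X := mem_inter.2 ⟨hxB, hCX hxC⟩
    rw [hb, mem_singleton] at this
    exact hbC (this ▸ hxC)
  have hXC : (X \ C).Nonempty := ⟨b, mem_sdiff.2 ⟨hbX, hbC⟩⟩
  refine ⟨replaceParts P X Y (X \ C) (Y ∪ C),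
    ⟨hPpart.replaceParts_sdiff_union hX hY hXY hCX hXC, B, hB, hBk, ?_⟩, ?_, ?_⟩
  · intro Z hZ
    rcases mem_insert.1 hZ with rfl | hZ
    · rw [inter_sdiff_eq_inter_of_disjoint hBC, hBP X hX]
    rcases mem_insert.1 hZ with rfl | hZ
    · rw [inter_union_eq_inter_of_disjoint hBC, hBP Y hY]
    exact hBP Z (mem_of_mem_erase (mem_of_mem_erase hZ))
  · have hsum := hPpart.sum_replaceParts_sdiff_union_add hX hY hXY hCX hXC (cutWeight G w)
    have hcut := cutWeight_sdiff_add_cutWeight_union_le G hw hCX hdisj hC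
    unfold partitionCost
    linarith
  · have hsum := hPpart.sum_replaceParts_sdiff_union_add hX hY hXY hCX hXC
      fun Z => #(adjPairsIn G Z)
    have hsplit := card_adjPairsIn_le_of_closed hC
    have hmerge :=
      card_adjPairsIn_add_lt_of_adj (disjoint_of_subset_right hCX hdisj.symm) hc hvY hcv
    unfold innerAdjPairs
    omega

theorem exists_min_cost_feasible_partition_with_connected_classes_general
    (G : SimpleGraph V) [DecidableRel G.Adj] (hG : G.Connected)
    (w : Sym2 V → ℝ) (hw : ∀ e, 0 ≤ w e)
    (Indep : Finset V → Prop) (k : ℕ)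
    (h_feas : ∃ P : Finset (Finset V), Feasible Indep k P) :
    ∃ P : Finset (Finset V), Feasible Indep k P ∧
      (∀ Q : Finset (Finset V), Feasible Indep k Q →
        ∑ X ∈ P, cutWeight G w X ≤ ∑ X ∈ Q, cutWeight G w X) ∧
      ∀ X ∈ P, ((G.induce (X : Set V)).Connected) := by
  classical
  obtain ⟨P, hP, hmin, hmax⟩ := (univ.filter (Feasible Indep k)).exists_min_image_max_image
    (partitionCost G w) (innerAdjPairs G) (by simpa [Finset.Nonempty] using h_feas)
  simp only [mem_filter, mem_univ, true_and] at hP hmin hmax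
  refine ⟨P, hP, hmin, fun X hX => by_contra fun hXconn => ?_⟩
  obtain ⟨P', hP', hcost, hpot⟩ := hP.exists_partitionCost_le_innerAdjPairs_lt hG hw hX hXconn
  exact (hmax P' hP' hcost).not_gt hpot

/-- among the minimum-cost feasible partitions, there is one all of whose
classes induce connected subgraphs of `G`. -/
theorem exists_min_cost_feasible_partition_with_connected_classes
    (G : SimpleGraph V) [DecidableRel G.Adj] (hG : G.Connected)
    (w : Sym2 V → ℝ) (hw : ∀ e, 0 ≤ w e)
    (Indep : Finset V → Prop) (k : ℕ) (hk : 1 ≤ k)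
    (h_empty : Indep ∅)
    (h_subset : ∀ ⦃I J : Finset V⦄, Indep J → I ⊆ J → Indep I)
    (h_exchange : ∀ ⦃I J : Finset V⦄, Indep I → Indep J → I.card < J.card →
      ∃ e ∈ J \ I, Indep (insert e I))
    (h_rank_le : ∀ I : Finset V, Indep I → I.card ≤ k)
    (h_rank_eq : ∃ B : Finset V, Indep B ∧ B.card = k)
    (h_feas : ∃ P : Finset (Finset V), Feasible Indep k P) :
    ∃ P : Finset (Finset V), Feasible Indep k P ∧
      (∀ Q : Finset (Finset V), Feasible Indep k Q →
        ∑ X ∈ P, cutWeight G w X ≤ ∑ X ∈ Q, cutWeight G w X) ∧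
      ∀ X ∈ P, ((G.induce (X : Set V)).Connected) :=
  exists_min_cost_feasible_partition_with_connected_classes_general G hG w hw Indep k h_feas
end

section
/- Let G = (V, E) be a finite tree with edge weights w : E → ℝ≥0, and let M_1 and M_2 be matroids on V, each of rank k ≥ 1. For j ∈ {1, 2} define I'_j = {X' ⊆ E : the vertex sets of the connected components of G − X' admit a transversal independent in M_j}, and call C ⊆ E a common spanning set if for each j ∈ {1, 2} there exists X_j ⊆ C with X_j ∈ I'_j and |X_j| = k − 1. Call a partition P of V into nonempty parts double-feasible if there exist a basis B_1 of M_1 and a basis B_2 of M_2 with |B_j ∩ X| = 1 for every class X ∈ P and j ∈ {1, 2}. Then the minimum of Σ_{X ∈ P} d_w(X) over all double-feasible partitions P equals 2 · min{ Σ_{e ∈ C} w(e) : C ⊆ E is a common spanning set }. -/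
open Finset

variable {V : Type*} [Fintype V] [DecidableEq V]

/-- `P` is double-feasible: a partition admitting a basis `B₁` of the first matroid and a
(possibly different) basis `B₂` of the second matroid, each with exactly one element in
each class. -/
def DoubleFeasible (Indep₁ Indep₂ : Finset V → Prop) (k : ℕ)
    (P : Finset (Finset V)) : Prop :=
  IsPartition P ∧
  (∃ B₁ : Finset V, Indep₁ B₁ ∧ B₁.card = k ∧ ∀ X ∈ P, (B₁ ∩ X).card = 1) ∧
  (∃ B₂ : Finset V, Indep₂ B₂ ∧ B₂.card = k ∧ ∀ X ∈ P, (B₂ ∩ X).card = 1)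

/-- `C` is a common spanning set: a set of edges of `G` containing, for each of the two
matroids, a member of the corresponding family `I'ⱼ` of size `k - 1`. -/
def CommonSpanningSet (Indep₁ Indep₂ : Finset V → Prop) (G : SimpleGraph V) (k : ℕ)
    (C : Finset (Sym2 V)) : Prop :=
  (C : Set (Sym2 V)) ⊆ G.edgeSet ∧
  (∃ X₁ ⊆ C, TreeCutIndep Indep₁ G X₁ ∧ X₁.card = k - 1) ∧
  (∃ X₂ ⊆ C, TreeCutIndep Indep₂ G X₂ ∧ X₂.card = k - 1)

/-!
Both sides are compared through the crossing edges of a labelling `f` of the vertices, the edges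
whose endpoints get different labels. Every partition is the fibre partition of a labelling, and
each crossing edge lies on the boundary of exactly two fibres, so `∑ X ∈ P, d_w(X)` is twice the
weight of the crossing edges.

Deleting `d` edges from a tree leaves exactly `d + 1` components, since every edge of a forest is a
bridge. If `f` is injective on a set `B`, take a maximal set `D` of crossing edges such that every
component of `G - D` still meets `B`. Two points of `B` in one component would have different
labels, so the path between them contains a crossing edge that could be added to `D`; hence `B` is
a transversal of `G - D` and `|D| = |B| - 1`. Applied to the two bases of a double-feasible
partition, this makes its crossing edges a common spanning set.

Conversely, let `X₁, X₂ ⊆ C` have transversals `T₁, T₂`, both of size `k`. Each component of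
`G - (X₁ ∪ X₂)` contains at most one point of each `Tⱼ`. Keep the components that meet `T₁`, match
the components that meet `T₂` but not `T₁` bijectively with those that meet `T₁` but not `T₂`, and
send every other component to one that meets `T₁`. The fibres of this relabelling form a
double-feasible partition, and all of its crossing edges lie in `X₁ ∪ X₂ ⊆ C`.
-/

theorem Finset.exists_retraction_bijOn_of_card_eq {K : Type*} [DecidableEq K] {A B : Finset K}
    (hA : A.Nonempty) (hAB : #A = #B) :
    ∃ g : K → K, (∀ x, g x ∈ A) ∧ Set.BijOn g A A ∧ Set.BijOn g B A := by
  obtain ⟨a₀, ha₀⟩ := hA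
  have : Nonempty K := ⟨a₀⟩
  obtain ⟨e, he⟩ : ∃ e : K → K, Set.BijOn e ↑(B \ A) ↑(A \ B) :=
    (B \ A).finite_toSet.exists_bijOn_of_encard_eq (by
      simp only [Set.encard_coe_eq_coe_finsetCard, card_sdiff_comm hAB.symm])
  have heBA : ∀ x ∈ B \ A, e x ∈ A \ B := fun x hx => he.mapsTo (mem_coe.2 hx)
  set g : K → K := fun x => if x ∈ A then x else if x ∈ B then e x else a₀
  have hgA : Set.EqOn g id A := fun x hx => if_pos hx
  have hgBA : Set.EqOn g e ↑(B \ A) := fun x hx => by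
    obtain ⟨hxB, hxA⟩ := mem_sdiff.1 hx
    simp [g, hxA, hxB]
  refine ⟨g, fun x => ?_, (Set.bijOn_id _).congr hgA.symm, ?_⟩
  · dsimp only [g]
    split_ifs with hxA hxB
    exacts [hxA, (mem_sdiff.1 (heBA x (mem_sdiff.2 ⟨hxB, hxA⟩))).1, ha₀]
  have hid : Set.BijOn g ↑(A ∩ B) ↑(A ∩ B) :=
    (Set.bijOn_id _).congr (hgA.mono (coe_subset.2 inter_subset_left)).symm
  have hinj : Set.InjOn g (↑(B \ A) ∪ ↑(A ∩ B)) := by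
    refine (Set.injOn_union (disjoint_coe.2 (disjoint_left.2 (by simp_all)))).2
      ⟨hgBA.injOn_iff.2 he.injOn, hid.injOn, fun x hx y hy hxy => ?_⟩
    rw [hgBA hx, hgA (coe_subset.2 inter_subset_left hy)] at hxy
    have := heBA x hx
    simp_all
  have := (he.congr hgBA.symm).union hid hinj
  rwa [← coe_union, ← coe_union, sdiff_union_inter, inter_comm, sdiff_union_inter] at this

namespace SimpleGraph

section

variable {V : Type*} {G : SimpleGraph V} {x y u v : V}

theorem Reachable.deleteEdges_singleton_or_s4 (h : G.Reachable x y) (u v : V) :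
    (G.deleteEdges {s(u, v)}).Reachable x y ∨
      ((G.deleteEdges {s(u, v)}).Reachable x u ∧ (G.deleteEdges {s(u, v)}).Reachable v y) ∨
      ((G.deleteEdges {s(u, v)}).Reachable x v ∧ (G.deleteEdges {s(u, v)}).Reachable u y) := by
  obtain ⟨p⟩ := h
  induction p with
  | nil => exact .inl .rfl
  | @cons a b c hab p ih =>
    by_cases he : s(a, b) = s(u, v)
    · rcases Sym2.eq_iff.1 he with ⟨rfl, rfl⟩ | ⟨rfl, rfl⟩ <;>
        rcases ih with h | ⟨h₁, h₂⟩ | ⟨h₁, h₂⟩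
      exacts [.inr (.inl ⟨.rfl, h⟩), .inr (.inl ⟨.rfl, h₂⟩), .inl h₂,
        .inr (.inr ⟨.rfl, h⟩), .inl h₂, .inl (h₁.symm.trans h₂)]
    · have hab' : (G.deleteEdges {s(u, v)}).Reachable a b :=
        (deleteEdges_adj.2 ⟨hab, he⟩).reachable
      rcases ih with h | ⟨h₁, h₂⟩ | ⟨h₁, h₂⟩
      exacts [.inl (hab'.trans h), .inr (.inl ⟨hab'.trans h₁, h₂⟩),
        .inr (.inr ⟨hab'.trans h₁, h₂⟩)]

theorem IsAcyclic.not_reachable_deleteEdges_of_mem_edges (hG : G.IsAcyclic) {p : G.Walk x y}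
    (hp : p.IsPath) (he : s(u, v) ∈ p.edges) : ¬ (G.deleteEdges {s(u, v)}).Reachable x y := by
  classical
  rw [reachable_deleteEdges_iff_exists_walk]
  rintro ⟨q, hq⟩
  have hpq : (⟨p, hp⟩ : G.Path x y) = q.toPath := (hG.subsingleton_path x y).elim _ _
  exact hq (q.edges_toPath_subset_edges (congrArg Subtype.val hpq ▸ he))

theorem IsAcyclic.exists_reachable_deleteEdges (hG : G.IsAcyclic) {B : Set V}
    (hB : ∀ z, ∃ b ∈ B, G.Reachable z b) {p : G.Walk x y} (hp : p.IsPath) (hx : x ∈ B)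
    (hy : y ∈ B) (he : s(u, v) ∈ p.edges) (z : V) :
    ∃ b ∈ B, (G.deleteEdges {s(u, v)}).Reachable z b := by
  have hsep := hG.not_reachable_deleteEdges_of_mem_edges hp he
  have huv : (∃ b ∈ B, (G.deleteEdges {s(u, v)}).Reachable u b) ∧
      ∃ b ∈ B, (G.deleteEdges {s(u, v)}).Reachable v b := by
    rcases p.reachable.deleteEdges_singleton_or_s4 u v with h | ⟨h₁, h₂⟩ | ⟨h₁, h₂⟩
    exacts [(hsep h).elim, ⟨⟨x, hx, h₁.symm⟩, ⟨y, hy, h₂⟩⟩, ⟨⟨y, hy, h₂⟩, ⟨x, hx, h₁.symm⟩⟩]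
  obtain ⟨b, hb, hzb⟩ := hB z
  rcases hzb.deleteEdges_singleton_or_s4 u v with h | ⟨h, -⟩ | ⟨h, -⟩
  · exact ⟨b, hb, h⟩
  · obtain ⟨b', hb', h'⟩ := huv.1
    exact ⟨b', hb', h.trans h'⟩
  · obtain ⟨b', hb', h'⟩ := huv.2
    exact ⟨b', hb', h.trans h'⟩

theorem card_connectedComponent_deleteEdges_of_isBridge [Finite V] (hadj : G.Adj u v)
    (hb : G.IsBridge s(u, v)) :
    Nat.card (G.deleteEdges {s(u, v)}).ConnectedComponent = Nat.card G.ConnectedComponent + 1 := by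
  classical
  set H := G.deleteEdges {s(u, v)}
  have : Fintype H.ConnectedComponent := Fintype.ofFinite _
  have : Fintype G.ConnectedComponent := Fintype.ofFinite _
  let φ : H.ConnectedComponent → G.ConnectedComponent :=
    ConnectedComponent.map (Hom.ofLE (deleteEdges_le _))
  have huv : H.connectedComponentMk u ≠ H.connectedComponentMk v := fun h =>
    hb (ConnectedComponent.exact h)
  have hinj : Set.InjOn φ ↑(univ.erase (H.connectedComponentMk v)) := by
    intro c hc c' hc' hcc'
    induction c using ConnectedComponent.ind with | h x => ?_
    induction c' using ConnectedComponent.ind with | h y => ?_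
    simp only [coe_erase, coe_univ, Set.mem_sdiff, Set.mem_univ, Set.mem_singleton_iff, true_and,
      ConnectedComponent.eq] at hc hc'
    rcases (ConnectedComponent.exact hcc').deleteEdges_singleton_or_s4 u v with h | ⟨-, h⟩ | ⟨h, -⟩
    exacts [ConnectedComponent.sound h, (hc' h.symm).elim, (hc h).elim]
  have himage : (univ.erase (H.connectedComponentMk v)).image φ = univ := by
    refine eq_univ_of_forall fun c => ?_
    obtain ⟨c', rfl⟩ := ConnectedComponent.surjective_map_ofLE (deleteEdges_le (G := G) {s(u, v)}) c
    by_cases hc' : c' = H.connectedComponentMk v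
    · refine mem_image.2 ⟨H.connectedComponentMk u, by simpa using huv, ?_⟩
      rw [hc']
      exact ConnectedComponent.connectedComponentMk_eq_of_adj hadj
    · exact mem_image_of_mem _ (by simpa using hc')
  have := card_image_of_injOn hinj
  rw [himage, card_erase_of_mem (mem_univ _), card_univ, card_univ] at this
  rw [Nat.card_eq_fintype_card, Nat.card_eq_fintype_card, this,
    Nat.sub_add_cancel (Fintype.card_pos_iff.2 ⟨H.connectedComponentMk u⟩)]

theorem deleteEdges_coe_insert [DecidableEq V] (e : Sym2 V) (D : Finset (Sym2 V)) :
    G.deleteEdges ↑(insert e D) = (G.deleteEdges ↑D).deleteEdges {e} := by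
  rw [coe_insert, Set.insert_eq, Set.union_comm, deleteEdges_deleteEdges]

def IsTransversal (H : SimpleGraph V) (T : Finset V) : Prop :=
  ∀ c : H.ConnectedComponent, ∃! v, v ∈ T ∧ H.connectedComponentMk v = c

theorem IsTransversal.injOn {H : SimpleGraph V} {T : Finset V} (hT : H.IsTransversal T) :
    Set.InjOn H.connectedComponentMk T := fun a ha b hb hab => by
  obtain ⟨v, -, hv⟩ := hT (H.connectedComponentMk a)
  exact (hv a ⟨ha, rfl⟩).trans (hv b ⟨hb, hab.symm⟩).symm

theorem IsTransversal.injOn_of_le {H H' : SimpleGraph V} {T : Finset V}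
    (hT : H'.IsTransversal T) (hle : H ≤ H') : Set.InjOn H.connectedComponentMk T :=
  Set.InjOn.of_comp (g := ConnectedComponent.map (Hom.ofLE hle)) hT.injOn

theorem IsTransversal.card_eq {H : SimpleGraph V} {T : Finset V} (hT : H.IsTransversal T) :
    #T = Nat.card H.ConnectedComponent := by
  rw [← Nat.card_eq_finsetCard]
  refine Nat.card_eq_of_bijective (fun v : T => H.connectedComponentMk v)
    ⟨fun a b hab => Subtype.ext (hT.injOn a.2 b.2 hab), fun c => ?_⟩
  obtain ⟨v, ⟨hv, rfl⟩, -⟩ := hT c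
  exact ⟨⟨v, hv⟩, rfl⟩

end

section CrossingEdges

variable {V : Type*} [Fintype V] {α : Type*} [DecidableEq α] (G : SimpleGraph V)
  [DecidableRel G.Adj]

def crossingEdges (f : V → α) : Finset (Sym2 V) :=
  G.edgeFinset.filter fun e => ¬ (e.map f).IsDiag

theorem coe_crossingEdges_subset (f : V → α) : ↑(G.crossingEdges f) ⊆ G.edgeSet :=
  fun _ he => mem_edgeFinset.1 (filter_subset _ _ he)

theorem crossingEdges_comp_connectedComponentMk_subset (D : Finset (Sym2 V))
    (g : (G.deleteEdges ↑D).ConnectedComponent → α) :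
    G.crossingEdges (g ∘ (G.deleteEdges ↑D).connectedComponentMk) ⊆ D := by
  intro e he
  induction e using Sym2.ind with | _ a b => ?_
  simp only [crossingEdges, mem_filter, mem_edgeFinset, mem_edgeSet, Sym2.map_mk,
    Sym2.mk_isDiag_iff, Function.comp_apply] at he
  by_contra hD
  exact he.2 (congrArg g (ConnectedComponent.connectedComponentMk_eq_of_adj
    (deleteEdges_adj.2 ⟨he.1, hD⟩)))

end CrossingEdges

end SimpleGraph

section Labelling

variable {α : Type*} [DecidableEq α]

def fiberPartition (f : V → α) : Finset (Finset V) :=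
  univ.image fun x => ({y | f y = f x} : Finset V)

theorem isPartition_fiberPartition (f : V → α) : IsPartition (fiberPartition f) := by
  simp only [IsPartition, fiberPartition, mem_image, mem_univ, true_and, forall_exists_index,
    forall_apply_eq_imp_iff]
  refine ⟨fun x => ⟨x, by simp⟩, fun x y hxy => disjoint_left.2 fun z hzx hzy => hxy ?_,
    eq_univ_of_forall fun x => mem_sup.2 ⟨_, mem_image_of_mem _ (mem_univ x), by simp⟩⟩
  ext
  simp_all

theorem IsPartition.exists_eq_fiberPartition {P : Finset (Finset V)} (hP : IsPartition P) :
    ∃ f : V → Finset V, P = fiberPartition f := by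
  obtain ⟨hne, hdisj, hcover⟩ := hP
  have hmem : ∀ x, ∃ X ∈ P, x ∈ X := fun x => by
    simpa using (hcover ▸ mem_univ x : x ∈ P.sup id)
  choose f hfP hxf using hmem
  have hf : ∀ X ∈ P, ∀ x ∈ X, f x = X := fun X hX x hx => by
    by_contra h
    exact disjoint_left.1 (hdisj _ (hfP x) X hX h) (hxf x) hx
  have hfiber : ∀ x, ({y | f y = f x} : Finset V) = f x := fun x => by
    ext y
    simp only [mem_filter, mem_univ, true_and]
    exact ⟨fun h => h ▸ hxf y, hf _ (hfP x) y⟩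
  refine ⟨f, ?_⟩
  ext X
  simp only [fiberPartition, hfiber, mem_image, mem_univ, true_and]
  refine ⟨fun hX => ?_, fun ⟨x, hx⟩ => hx ▸ hfP x⟩
  obtain ⟨x, hx⟩ := hne X hX
  exact ⟨x, hf X hX x hx⟩

theorem forall_fiberPartition_card_inter_eq_one_iff {f : V → α} {B : Finset V} :
    (∀ X ∈ fiberPartition f, #(B ∩ X) = 1) ↔ Set.InjOn f B ∧ ∀ x, ∃ b ∈ B, f b = f x := by
  simp only [fiberPartition, mem_image, mem_univ, true_and, forall_exists_index,
    forall_apply_eq_imp_iff]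
  refine ⟨fun h => ⟨fun a ha b hb hab => ?_, fun x => ?_⟩, fun ⟨hinj, hsurj⟩ x => ?_⟩
  · exact card_le_one.1 (h a).le a (by simp_all) b (by simp_all)
  · obtain ⟨b, hb⟩ := card_pos.1 ((h x).symm ▸ one_pos)
    exact ⟨b, by simpa using hb⟩
  · obtain ⟨b, hb, hbx⟩ := hsurj x
    refine card_eq_one.2 ⟨b, eq_singleton_iff_unique_mem.2 ⟨by simp [hb, hbx], fun c hc => ?_⟩⟩
    simp only [mem_inter, mem_filter, mem_univ, true_and] at hc
    exact hinj hc.1 hb (hc.2.trans hbx.symm)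

theorem forall_fiberPartition_comp_card_inter_eq_one {β : Type*} [DecidableEq β] {κ : V → β}
    {g : β → α} {A : Finset α} (hgA : ∀ y, g y ∈ A) {T : Finset V} (hT : Set.InjOn κ T)
    (hg : Set.BijOn g ↑(T.image κ) ↑A) : ∀ X ∈ fiberPartition (g ∘ κ), #(T ∩ X) = 1 := by
  refine forall_fiberPartition_card_inter_eq_one_iff.2
    ⟨hg.injOn.comp hT fun x hx => mem_image_of_mem _ hx, fun x => ?_⟩
  obtain ⟨a, ha, hax⟩ := hg.surjOn (hgA (κ x))
  obtain ⟨b, hb, rfl⟩ := mem_image.1 ha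
  exact ⟨b, hb, hax⟩

theorem card_filter_fiberPartition_separating (f : V → α) (a b : V) :
    #{X ∈ fiberPartition f | (a ∈ X ∧ b ∉ X) ∨ (b ∈ X ∧ a ∉ X)} = if f a = f b then 0 else 2 := by
  split_ifs with hab
  · refine card_eq_zero.2 (filter_eq_empty_iff.2 fun X hX => ?_)
    obtain ⟨x, -, rfl⟩ := mem_image.1 hX
    simp [hab]
  · have hne : ({y | f y = f a} : Finset V) ≠ ({y | f y = f b} : Finset V) := fun h => by
      have ha : a ∈ ({y | f y = f a} : Finset V) := by simp
      simp [h, hab] at ha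
    rw [← card_pair hne]
    congr 1
    ext X : 1
    simp only [fiberPartition, mem_filter, mem_image, mem_univ, true_and, mem_insert,
      mem_singleton]
    constructor
    · rintro ⟨⟨x, rfl⟩, h | h⟩ <;> simp only [mem_filter, mem_univ, true_and] at h
      exacts [.inl (by rw [h.1]), .inr (by rw [h.1])]
    · rintro (rfl | rfl)
      exacts [⟨⟨a, rfl⟩, by simp [Ne.symm hab]⟩, ⟨⟨b, rfl⟩, by simp [hab]⟩]

theorem sum_cutWeight_fiberPartition (G : SimpleGraph V) [DecidableRel G.Adj] (w : Sym2 V → ℝ)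
    (f : V → α) : ∑ X ∈ fiberPartition f, cutWeight G w X = 2 * ∑ e ∈ G.crossingEdges f, w e := by
  simp only [cutWeight, SimpleGraph.crossingEdges]
  rw [sum_comm, sum_filter, mul_sum]
  refine sum_congr rfl fun e _ => ?_
  induction e using Sym2.ind with | _ a b => ?_
  have hsep : ∀ X : Finset V, (∃ u v : V, s(a, b) = s(u, v) ∧ u ∈ X ∧ v ∉ X) ↔
      (a ∈ X ∧ b ∉ X) ∨ (b ∈ X ∧ a ∉ X) := fun X => by
    simp only [Sym2.eq_iff]
    grind
  rw [← sum_filter, sum_const, nsmul_eq_mul]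
  simp only [hsep, card_filter_fiberPartition_separating]
  split_ifs <;> simp_all

end Labelling

namespace SimpleGraph

variable {G : SimpleGraph V}

theorem IsTree.card_connectedComponent_deleteEdges (hG : G.IsTree) {D : Finset (Sym2 V)}
    (hD : ↑D ⊆ G.edgeSet) : Nat.card (G.deleteEdges ↑D).ConnectedComponent = #D + 1 := by
  induction D using Finset.induction_on with
  | empty =>
    have := hG.connected.preconnected.subsingleton_connectedComponent
    have := hG.connected.nonempty.map G.connectedComponentMk
    rw [coe_empty, deleteEdges_empty, card_empty]
    exact Nat.card_unique
  | @insert e D he ih =>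
    induction e using Sym2.ind with | _ u v => ?_
    have hadj : (G.deleteEdges ↑D).Adj u v :=
      deleteEdges_adj.2 ⟨hD (mem_coe.2 (mem_insert_self _ _)), he⟩
    have hbridge := isAcyclic_iff_forall_adj_isBridge.1 (hG.isAcyclic.anti (deleteEdges_le _)) hadj
    rw [deleteEdges_coe_insert, card_connectedComponent_deleteEdges_of_isBridge hadj hbridge,
      ih ((Set.subset_insert _ _).trans (by simpa using hD)), card_insert_of_notMem he]

theorem IsTree.card_isTransversal_deleteEdges (hG : G.IsTree) {D : Finset (Sym2 V)}
    (hD : ↑D ⊆ G.edgeSet) {T : Finset V} (hT : (G.deleteEdges ↑D).IsTransversal T) :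
    #T = #D + 1 := by
  rw [hT.card_eq, hG.card_connectedComponent_deleteEdges hD]

theorem IsTree.exists_isTransversal_deleteEdges [DecidableRel G.Adj] (hG : G.IsTree)
    {α : Type*} [DecidableEq α] (f : V → α) {B : Finset V} (hB : B.Nonempty) (hf : Set.InjOn f B) :
    ∃ D ⊆ G.crossingEdges f, #D + 1 = #B ∧ (G.deleteEdges ↑D).IsTransversal B := by
  set p : Finset (Sym2 V) → Prop := fun D =>
    D ⊆ G.crossingEdges f ∧ ∀ z, ∃ b ∈ (B : Set V), (G.deleteEdges ↑D).Reachable z b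
  obtain ⟨b₀, hb₀⟩ := hB
  have hp₀ : p ∅ := ⟨empty_subset _, fun z => ⟨b₀, hb₀, by simpa using hG.connected z b₀⟩⟩
  obtain ⟨D, -, ⟨hDf, hDB⟩, hmax⟩ := Finite.exists_le_maximal hp₀
  set H := G.deleteEdges ↑D
  have hinj : Set.InjOn H.connectedComponentMk B := by
    intro b hb b' hb' hbb'
    by_contra hne
    obtain ⟨q⟩ := ConnectedComponent.exact hbb'
    obtain ⟨d, hd, hd₁, hd₂⟩ := q.toPath.val.exists_boundary_dart {z | f z = f b} rfl
      fun h => hne (hf hb' hb h).symm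
    have hdq : s(d.fst, d.snd) ∈ q.toPath.val.edges :=
      q.toPath.val.edges_eq_map_darts ▸ List.mem_map_of_mem hd
    obtain ⟨hdG, hdD⟩ := deleteEdges_adj.1 d.adj
    have hp : p (insert s(d.fst, d.snd) D) := by
      refine ⟨insert_subset (mem_filter.2 ⟨mem_edgeFinset.2 hdG, ?_⟩) hDf, ?_⟩
      · simp only [Sym2.map_mk, Sym2.mk_isDiag_iff]
        exact fun h => hd₂ (h ▸ hd₁ : f d.snd = f b)
      · rw [deleteEdges_coe_insert]
        exact (hG.isAcyclic.anti (deleteEdges_le _)).exists_reachable_deleteEdges hDB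
          q.toPath.2 hb hb' hdq
    exact hdD (hmax hp (subset_insert _ _) (mem_insert_self _ _))
  have hT : H.IsTransversal B := fun c => by
    induction c using ConnectedComponent.ind with | h z => ?_
    obtain ⟨b, hb, hzb⟩ := hDB z
    have hbz := ConnectedComponent.sound hzb.symm
    exact ⟨b, ⟨hb, hbz⟩, fun b' ⟨hb', h⟩ => hinj hb' hb (h.trans hbz.symm)⟩
  have hDG : ↑D ⊆ G.edgeSet := fun e he => mem_edgeFinset.1 (filter_subset _ _ (hDf he))
  exact ⟨D, hDf, (hG.card_isTransversal_deleteEdges hDG hT).symm, hT⟩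

end SimpleGraph

section Feasibility

open SimpleGraph

variable {G : SimpleGraph V} [DecidableRel G.Adj] {Indep₁ Indep₂ : Finset V → Prop} {k : ℕ}

theorem DoubleFeasible.exists_commonSpanningSet (hG : G.IsTree) (w : Sym2 V → ℝ) (hk : 1 ≤ k)
    {P : Finset (Finset V)} (hP : DoubleFeasible Indep₁ Indep₂ k P) :
    ∃ C, CommonSpanningSet Indep₁ Indep₂ G k C ∧ 2 * ∑ e ∈ C, w e = ∑ X ∈ P, cutWeight G w X := by
  obtain ⟨hpart, ⟨B₁, hB₁, hB₁k, hB₁P⟩, ⟨B₂, hB₂, hB₂k, hB₂P⟩⟩ := hP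
  obtain ⟨f, rfl⟩ := hpart.exists_eq_fiberPartition
  have hcut : ∀ {Indep : Finset V → Prop} {B : Finset V}, Indep B → #B = k →
      (∀ X ∈ fiberPartition f, #(B ∩ X) = 1) →
      ∃ X ⊆ G.crossingEdges f, TreeCutIndep Indep G X ∧ #X = k - 1 := by
    intro Indep B hB hBk hBP
    obtain ⟨D, hDf, hDB, hD⟩ := hG.exists_isTransversal_deleteEdges f
      (card_pos.1 (by omega)) (forall_fiberPartition_card_inter_eq_one_iff.1 hBP).1
    exact ⟨D, hDf, ⟨(coe_subset.2 hDf).trans (G.coe_crossingEdges_subset f), B, hB, hD⟩,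
      by omega⟩
  exact ⟨G.crossingEdges f, ⟨G.coe_crossingEdges_subset f, hcut hB₁ hB₁k hB₁P,
    hcut hB₂ hB₂k hB₂P⟩, (sum_cutWeight_fiberPartition G w f).symm⟩

theorem CommonSpanningSet.exists_doubleFeasible (hG : G.IsTree) {w : Sym2 V → ℝ}
    (hw : ∀ e, 0 ≤ w e) (hk : 1 ≤ k) {C : Finset (Sym2 V)}
    (hC : CommonSpanningSet Indep₁ Indep₂ G k C) :
    ∃ P, DoubleFeasible Indep₁ Indep₂ k P ∧ ∑ X ∈ P, cutWeight G w X ≤ 2 * ∑ e ∈ C, w e := by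
  classical
  obtain ⟨-, ⟨X₁, hX₁C, ⟨hX₁G, T₁, hT₁, hT₁X⟩, hX₁k⟩, ⟨X₂, hX₂C, ⟨hX₂G, T₂, hT₂, hT₂X⟩, hX₂k⟩⟩ :=
    hC
  set H := G.deleteEdges ↑(X₁ ∪ X₂)
  have hinj₁ : Set.InjOn H.connectedComponentMk T₁ :=
    IsTransversal.injOn_of_le hT₁X (deleteEdges_anti (coe_subset.2 subset_union_left))
  have hinj₂ : Set.InjOn H.connectedComponentMk T₂ :=
    IsTransversal.injOn_of_le hT₂X (deleteEdges_anti (coe_subset.2 subset_union_right))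
  have hT₁k : #T₁ = k := by have := hG.card_isTransversal_deleteEdges hX₁G hT₁X; omega
  have hT₂k : #T₂ = k := by have := hG.card_isTransversal_deleteEdges hX₂G hT₂X; omega
  set A₁ := T₁.image H.connectedComponentMk
  have hA₁ : #A₁ = k := (card_image_of_injOn hinj₁).trans hT₁k
  have hA₂ : #(T₂.image H.connectedComponentMk) = k := (card_image_of_injOn hinj₂).trans hT₂k
  obtain ⟨g, hgA, hg₁, hg₂⟩ :=
    exists_retraction_bijOn_of_card_eq (card_pos.1 (by omega)) (hA₁.trans hA₂.symm)
  refine ⟨fiberPartition (g ∘ H.connectedComponentMk), ⟨isPartition_fiberPartition _,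
    ⟨T₁, hT₁, hT₁k, forall_fiberPartition_comp_card_inter_eq_one hgA hinj₁ hg₁⟩,
    ⟨T₂, hT₂, hT₂k, forall_fiberPartition_comp_card_inter_eq_one hgA hinj₂ hg₂⟩⟩, ?_⟩
  rw [sum_cutWeight_fiberPartition]
  refine mul_le_mul_of_nonneg_left (sum_le_sum_of_subset_of_nonneg ?_ fun e _ _ => hw e) zero_le_two
  exact (G.crossingEdges_comp_connectedComponentMk_subset _ g).trans (union_subset hX₁C hX₂C)

end Feasibility

theorem double_mc_multiway_cut_on_trees_general
    (G : SimpleGraph V) [DecidableRel G.Adj] (hG : G.IsTree)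
    (w : Sym2 V → ℝ) (hw : ∀ e, 0 ≤ w e)
    (Indep₁ Indep₂ : Finset V → Prop) (k : ℕ) (hk : 1 ≤ k) :
    sInf {c : ℝ | ∃ P : Finset (Finset V), DoubleFeasible Indep₁ Indep₂ k P ∧
        c = ∑ X ∈ P, cutWeight G w X} =
      2 * sInf {c : ℝ | ∃ C : Finset (Sym2 V), CommonSpanningSet Indep₁ Indep₂ G k C ∧
        c = ∑ e ∈ C, w e} := by
  rw [← smul_eq_mul, ← Real.sInf_smul_of_nonneg zero_le_two]
  refine csInf_eq_csInf_of_forall_exists_le ?_ ?_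
  · rintro _ ⟨P, hP, rfl⟩
    obtain ⟨C, hC, hCP⟩ := hP.exists_commonSpanningSet hG w hk
    exact ⟨_, Set.smul_mem_smul_set ⟨C, hC, rfl⟩, hCP.le⟩
  · rintro _ ⟨_, ⟨C, hC, rfl⟩, rfl⟩
    obtain ⟨P, hP, hPC⟩ := hC.exists_doubleFeasible hG hw hk
    exact ⟨_, ⟨P, hP, rfl⟩, hPC⟩

/-- on a tree, the minimum cost of a double-feasible partition equals twice
the minimum weight of a common spanning set. -/
theorem double_mc_multiway_cut_on_trees
    (G : SimpleGraph V) [DecidableRel G.Adj] (hG : G.IsTree)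
    (w : Sym2 V → ℝ) (hw : ∀ e, 0 ≤ w e)
    (Indep₁ Indep₂ : Finset V → Prop) (k : ℕ) (hk : 1 ≤ k)
    (h_empty₁ : Indep₁ ∅)
    (h_subset₁ : ∀ ⦃I J : Finset V⦄, Indep₁ J → I ⊆ J → Indep₁ I)
    (h_exchange₁ : ∀ ⦃I J : Finset V⦄, Indep₁ I → Indep₁ J → I.card < J.card →
      ∃ e ∈ J \ I, Indep₁ (insert e I))
    (h_rank_le₁ : ∀ I : Finset V, Indep₁ I → I.card ≤ k)
    (h_rank_eq₁ : ∃ B : Finset V, Indep₁ B ∧ B.card = k)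
    (h_empty₂ : Indep₂ ∅)
    (h_subset₂ : ∀ ⦃I J : Finset V⦄, Indep₂ J → I ⊆ J → Indep₂ I)
    (h_exchange₂ : ∀ ⦃I J : Finset V⦄, Indep₂ I → Indep₂ J → I.card < J.card →
      ∃ e ∈ J \ I, Indep₂ (insert e I))
    (h_rank_le₂ : ∀ I : Finset V, Indep₂ I → I.card ≤ k)
    (h_rank_eq₂ : ∃ B : Finset V, Indep₂ B ∧ B.card = k) :
    sInf {c : ℝ | ∃ P : Finset (Finset V), DoubleFeasible Indep₁ Indep₂ k P ∧
        c = ∑ X ∈ P, cutWeight G w X} =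
      2 * sInf {c : ℝ | ∃ C : Finset (Sym2 V), CommonSpanningSet Indep₁ Indep₂ G k C ∧
        c = ∑ e ∈ C, w e} :=
  double_mc_multiway_cut_on_trees_general G hG w hw Indep₁ Indep₂ k hk
end

section
/- Let M be a matroid of rank k ≥ 1 on a finite ground set V such that every subset of V of size at most k − 1 is independent (i.e., M is a paving matroid). Then for every partition {V_1, …, V_k} of V into k nonempty parts, there exists a basis B of M such that |B ∩ V_i| = 1 for every i ∈ [k]. -/
/-!
Encode the partition by the map `p` sending each element to its part, and grow the number of
parts hit by a basis `B` one at a time. If `B` misses a part, then, having `k` elements in fewer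
than `k` parts, it contains two elements `x₁ ≠ x₂` of a common part. Replacing them by an element
`v` of a missed part gives a set of size `k - 1`, independent because the matroid is paving;
augmenting it from `B` can only add back `x₁` or `x₂`, so the result is a basis hitting the parts
of `B` together with the part of `v`. A basis hitting all `k` parts meets each in one element.
-/

open Finset

section PavingTransversal

variable {V ι : Type*} [DecidableEq V] {Indep : Finset V → Prop} {k : ℕ}

theorem exists_indep_card_eq_insert_image_subset [DecidableEq ι]
    (h_exchange : ∀ ⦃I J : Finset V⦄, Indep I → Indep J → I.card < J.card →
      ∃ e ∈ J \ I, Indep (insert e I))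
    (h_paving : ∀ I : Finset V, I.card ≤ k - 1 → Indep I)
    (p : V → ι) {B : Finset V} (hB : Indep B) (hBk : B.card = k)
    {x₁ x₂ : V} (hx₁ : x₁ ∈ B) (hx₂ : x₂ ∈ B) (hx : x₁ ≠ x₂) (hpx : p x₁ = p x₂)
    {v : V} (hv : p v ∉ B.image p) :
    ∃ B', Indep B' ∧ B'.card = k ∧ insert (p v) (B.image p) ⊆ B'.image p := by
  have hvB : v ∉ B := fun h => hv (mem_image_of_mem p h)
  have hpair : {x₁, x₂} ⊆ B := insert_subset hx₁ (singleton_subset_iff.2 hx₂)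
  have hp_pair : ∀ y ∈ ({x₁, x₂} : Finset V), p y = p x₁ := by simp [hpx]
  have hk : 2 ≤ k := hBk ▸ card_pair hx ▸ card_le_card hpair
  set A := insert v (B \ {x₁, x₂})
  have hA : A.card = k - 1 := by
    rw [card_insert_of_notMem (by simp [hvB]), card_sdiff_of_subset hpair, card_pair hx, hBk]
    omega
  obtain ⟨e, he, hAe⟩ := h_exchange (h_paving A hA.le) hB (by omega)
  obtain ⟨heB, heA⟩ := mem_sdiff.1 he
  have hpe : p e = p x₁ := by
    refine hp_pair e (not_not.1 fun h => heA ?_)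
    exact mem_insert_of_mem (mem_sdiff.2 ⟨heB, h⟩)
  refine ⟨insert e A, hAe, by rw [card_insert_of_notMem heA, hA]; omega, ?_⟩
  intro i hi
  rcases mem_insert.1 hi with rfl | hi
  · exact mem_image_of_mem p (by simp [A])
  obtain ⟨b, hb, rfl⟩ := mem_image.1 hi
  by_cases hb' : b ∈ ({x₁, x₂} : Finset V)
  · rw [hp_pair b hb', ← hpe]
    exact mem_image_of_mem p (mem_insert_self e A)
  · exact mem_image_of_mem p (by simp [A, hb, hb'])

theorem exists_indep_card_eq_le_card_image [Fintype ι] [DecidableEq ι]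
    (h_exchange : ∀ ⦃I J : Finset V⦄, Indep I → Indep J → I.card < J.card →
      ∃ e ∈ J \ I, Indep (insert e I))
    (h_rank_eq : ∃ B : Finset V, Indep B ∧ B.card = k)
    (h_paving : ∀ I : Finset V, I.card ≤ k - 1 → Indep I)
    (hι : Fintype.card ι = k) {p : V → ι} (hp : Function.Surjective p) :
    ∀ n ≤ k, ∃ B : Finset V, Indep B ∧ B.card = k ∧ n ≤ (B.image p).card := by
  intro n hn
  induction n with
  | zero => simpa using h_rank_eq
  | succ n ih =>
    obtain ⟨B, hB, hBk, hnB⟩ := ih (by omega)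
    rcases hnB.lt_or_eq with hlt | heq
    · exact ⟨B, hB, hBk, hlt⟩
    obtain ⟨i, -, hi⟩ := exists_mem_notMem_of_card_lt_card
      (s := B.image p) (t := univ) (by rw [card_univ]; omega)
    obtain ⟨x₁, hx₁, x₂, hx₂, hx, hpx⟩ := exists_ne_map_eq_of_card_lt_of_maps_to
      (t := B.image p) (by omega) (fun x hx => mem_image_of_mem p hx)
    obtain ⟨v, rfl⟩ := hp i
    obtain ⟨B', hB', hB'k, hsub⟩ := exists_indep_card_eq_insert_image_subset
      h_exchange h_paving p hB hBk hx₁ hx₂ hx hpx hi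
    refine ⟨B', hB', hB'k, ?_⟩
    calc n + 1 = (insert (p v) (B.image p)).card := by rw [card_insert_of_notMem hi, heq]
      _ ≤ (B'.image p).card := card_le_card hsub

theorem exists_indep_card_eq_card_filter_eq_one [Fintype ι] [DecidableEq ι]
    (h_exchange : ∀ ⦃I J : Finset V⦄, Indep I → Indep J → I.card < J.card →
      ∃ e ∈ J \ I, Indep (insert e I))
    (h_rank_eq : ∃ B : Finset V, Indep B ∧ B.card = k)
    (h_paving : ∀ I : Finset V, I.card ≤ k - 1 → Indep I)
    (hι : Fintype.card ι = k) {p : V → ι} (hp : Function.Surjective p) :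
    ∃ B : Finset V, Indep B ∧ B.card = k ∧ ∀ i, (B.filter (p · = i)).card = 1 := by
  obtain ⟨B, hB, hBk, hkB⟩ :=
    exists_indep_card_eq_le_card_image h_exchange h_rank_eq h_paving hι hp k le_rfl
  have hcard : (B.image p).card = B.card := card_image_le.antisymm (hBk ▸ hkB)
  have hinj : Set.InjOn p B := card_image_iff.1 hcard
  have huniv : B.image p = univ := eq_univ_of_card _ (by rw [hcard, hBk, hι])
  refine ⟨B, hB, hBk, fun i => card_eq_one_iff_existsUnique.2 ?_⟩
  obtain ⟨b, hb, rfl⟩ := mem_image.1 (huniv ▸ mem_univ i)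
  exact ⟨b, mem_filter.2 ⟨hb, rfl⟩, fun c hc => hinj (mem_filter.1 hc).1 hb (mem_filter.1 hc).2⟩

end PavingTransversal

theorem paving_matroid_every_partition_feasible_general
    {V : Type*} [DecidableEq V]
    (Indep : Finset V → Prop) (k : ℕ)
    (h_exchange : ∀ ⦃I J : Finset V⦄, Indep I → Indep J → I.card < J.card →
      ∃ e ∈ J \ I, Indep (insert e I))
    (h_rank_eq : ∃ B : Finset V, Indep B ∧ B.card = k)
    (h_paving : ∀ I : Finset V, I.card ≤ k - 1 → Indep I)
    (Vp : Fin k → Finset V)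
    (h_ne : ∀ i, (Vp i).Nonempty)
    (h_disj : ∀ i j, i ≠ j → Disjoint (Vp i) (Vp j))
    (h_cover : ∀ v : V, ∃ i, v ∈ Vp i) :
    ∃ B : Finset V, Indep B ∧ B.card = k ∧ ∀ i, (B ∩ Vp i).card = 1 := by
  choose part h_part using h_cover
  have mem_iff : ∀ v i, v ∈ Vp i ↔ part v = i := fun v i =>
    ⟨fun hv => by_contra fun h => disjoint_left.1 (h_disj _ _ h) (h_part v) hv,
      fun h => h ▸ h_part v⟩
  have hsurj : Function.Surjective part := fun i =>
    let ⟨v, hv⟩ := h_ne i; ⟨v, (mem_iff v i).1 hv⟩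
  obtain ⟨B, hB, hBk, hB1⟩ := exists_indep_card_eq_card_filter_eq_one
    h_exchange h_rank_eq h_paving (Fintype.card_fin k) hsurj
  refine ⟨B, hB, hBk, fun i => ?_⟩
  rw [← hB1 i, ← filter_mem_eq_inter]
  simp only [mem_iff]

/-- if `M` is a rank-`k` paving matroid (every set of size at most `k - 1`
is independent), then every partition of `V` into `k` nonempty parts admits a basis
meeting each part in exactly one element. -/
theorem paving_matroid_every_partition_feasible
    {V : Type*} [Fintype V] [DecidableEq V]
    (Indep : Finset V → Prop) (k : ℕ) (hk : 1 ≤ k)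
    (h_empty : Indep ∅)
    (h_subset : ∀ ⦃I J : Finset V⦄, Indep J → I ⊆ J → Indep I)
    (h_exchange : ∀ ⦃I J : Finset V⦄, Indep I → Indep J → I.card < J.card →
      ∃ e ∈ J \ I, Indep (insert e I))
    (h_rank_le : ∀ I : Finset V, Indep I → I.card ≤ k)
    (h_rank_eq : ∃ B : Finset V, Indep B ∧ B.card = k)
    (h_paving : ∀ I : Finset V, I.card ≤ k - 1 → Indep I)
    (Vp : Fin k → Finset V)
    (h_ne : ∀ i, (Vp i).Nonempty)
    (h_disj : ∀ i j, i ≠ j → Disjoint (Vp i) (Vp j))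
    (h_cover : ∀ v : V, ∃ i, v ∈ Vp i) :
    ∃ B : Finset V, Indep B ∧ B.card = k ∧ ∀ i, (B ∩ Vp i).card = 1 :=
  paving_matroid_every_partition_feasible_general Indep k h_exchange h_rank_eq h_paving Vp h_ne
    h_disj h_cover
end

section
/- Let V be a finite set, f : Finset V → ℝ a submodular function with f(∅) = 0, and M a matroid on V. Let Q be a partition of V into i − 1 nonempty parts admitting an independent transversal, and let P = {V_1, …, V_i} be a partition of V into i ≥ 2 nonempty parts admitting an independent transversal. Then there exist a class W ∈ Q, a nonempty proper subset X ⊊ W, and an index j ∈ [i] such that the partition (Q \ {W}) ∪ {X, W \ X} admits an independent transversal and f(X) + f(W \ X) − f(W) ≤ f(V_j) + f(V \ V_j) − f(V). -/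
/-!
Among the independent transversals of `Q` pick `I` sharing as many elements as possible with an
independent transversal `J` of `P`. Since `|I| = i - 1 < i = |J|`, matroid exchange adds some
`e ∈ J \ I` to `I`. If the representative `w` of the class `W ∋ e` in `I` were outside `J`,
swapping `w` for `e` would contradict maximality; so `w ∈ J`, and `w` and `e` lie in different
classes `Vⱼ` of `P`. Splitting `W` along `Vⱼ` then separates `e` from `w`, so `I + e` is an
independent transversal of the refined partition, and two applications of submodularity bound
the cost of the split.
-/

open Finset

variable {V : Type*} [Fintype V] [DecidableEq V]

def AdmitsTransversal (Indep : Finset V → Prop) (P : Finset (Finset V)) : Prop :=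
  ∃ I : Finset V, Indep I ∧ ∀ X ∈ P, (I ∩ X).card = 1

section Transversal

variable {α : Type*} [DecidableEq α]

def IsTransversal (P : Finset (Finset α)) (I : Finset α) : Prop :=
  ∀ X ∈ P, (I ∩ X).card = 1

theorem card_eq_of_forall_card_inter_eq_one {ι : Type*} {s : Finset ι} {p : ι → Finset α}
    {I : Finset α} (hdisj : (s : Set ι).PairwiseDisjoint p) (hcover : ∀ v, ∃ x ∈ s, v ∈ p x)
    (hI : ∀ x ∈ s, (I ∩ p x).card = 1) : I.card = s.card := by
  have hI_eq : I = s.biUnion fun x => I ∩ p x := by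
    ext v
    simp only [mem_biUnion, mem_inter]
    refine ⟨fun hv => ?_, fun ⟨_, _, hv, _⟩ => hv⟩
    obtain ⟨x, hx, hvx⟩ := hcover v
    exact ⟨x, hx, hv, hvx⟩
  rw [hI_eq, card_biUnion (hdisj.mono fun x => inter_subset_right), sum_congr rfl hI,
    card_eq_sum_ones]

namespace IsTransversal

variable {P : Finset (Finset α)} {I W X : Finset α} {e w : α}

theorem inter_eq_singleton (hI : IsTransversal P I) (hW : W ∈ P) (hwI : w ∈ I) (hwW : w ∈ W) :
    I ∩ W = {w} := by
  obtain ⟨a, ha⟩ := card_eq_one.1 (hI W hW)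
  have hwa : w ∈ ({a} : Finset α) := ha ▸ mem_inter.2 ⟨hwI, hwW⟩
  rw [ha, mem_singleton.1 hwa]

theorem insert_erase (hP : (P : Set (Finset α)).PairwiseDisjoint id) (hI : IsTransversal P I)
    (hW : W ∈ P) (heW : e ∈ W) (hwI : w ∈ I) (hwW : w ∈ W) :
    IsTransversal P (insert e (I.erase w)) := by
  intro X hX
  by_cases hXW : X = W
  · subst hXW
    rw [insert_inter_of_mem heW, erase_inter, hI.inter_eq_singleton hX hwI hwW, erase_singleton,
      insert_empty, card_singleton]
  · have hdisj : Disjoint X W := hP hX hW hXW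
    rw [insert_inter_of_notMem (disjoint_right.1 hdisj heW), erase_inter,
      erase_eq_of_notMem fun h => disjoint_right.1 hdisj hwW (mem_inter.1 h).2]
    exact hI X hX

theorem insert_split (hP : (P : Set (Finset α)).PairwiseDisjoint id) (hI : IsTransversal P I)
    (hW : W ∈ P) (hXW : X ⊆ W) (heX : e ∈ X) (hwI : w ∈ I) (hwW : w ∈ W) (hwX : w ∉ X) :
    IsTransversal (insert X (insert (W \ X) (P.erase W))) (insert e I) := by
  have hIW := hI.inter_eq_singleton hW hwI hwW
  simp only [IsTransversal, mem_insert, mem_erase, forall_eq_or_imp]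
  refine ⟨?_, ?_, fun Z ⟨hZW, hZ⟩ => ?_⟩
  · rw [insert_inter_of_mem heX, ← inter_eq_right.2 hXW, ← inter_assoc, hIW,
      singleton_inter_of_notMem hwX, insert_empty, card_singleton]
  · rw [insert_inter_of_notMem fun h => (mem_sdiff.1 h).2 heX, ← inter_sdiff_assoc, hIW,
      sdiff_eq_self_of_disjoint (disjoint_singleton_left.2 hwX), card_singleton]
  · have hdisj : Disjoint Z W := hP hZ hW hZW
    rw [insert_inter_of_notMem fun h => disjoint_right.1 hdisj (hXW heX) h]
    exact hI Z hZ

end IsTransversal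

end Transversal

section Matroid

variable {α : Type*} [Fintype α] [DecidableEq α]

theorem IsPartition.exists_mem_s7 {P : Finset (Finset α)} (hP : IsPartition P) (v : α) :
    ∃ X ∈ P, v ∈ X :=
  mem_sup.1 (hP.2.2 ▸ mem_univ v)

theorem exists_transversal_exchange_of_card_lt {Indep : Finset α → Prop}
    (h_subset : ∀ ⦃I J : Finset α⦄, Indep J → I ⊆ J → Indep I)
    (h_exchange : ∀ ⦃I J : Finset α⦄, Indep I → Indep J → I.card < J.card →
      ∃ e ∈ J \ I, Indep (insert e I))
    {P : Finset (Finset α)} (hP : IsPartition P) (hPtr : AdmitsTransversal Indep P)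
    {J : Finset α} (hJ : Indep J) (hcard : P.card < J.card) :
    ∃ I, IsTransversal P I ∧ ∃ e ∈ J \ I, Indep (insert e I) ∧ ∀ W ∈ P, e ∈ W → I ∩ W ⊆ J := by
  classical
  obtain ⟨I, hI_mem, hI_max⟩ := exists_max_image
    (univ.filter fun I : Finset α => Indep I ∧ IsTransversal P I) (fun I => (I ∩ J).card)
    (let ⟨I, hI⟩ := hPtr; ⟨I, mem_filter.2 ⟨mem_univ I, hI⟩⟩)
  obtain ⟨hI, hItr⟩ := (mem_filter.1 hI_mem).2
  have hIcard : I.card = P.card :=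
    card_eq_of_forall_card_inter_eq_one (p := id) hP.2.1 hP.exists_mem_s7 hItr
  obtain ⟨e, heJI, hins⟩ := h_exchange hI hJ (hIcard ▸ hcard)
  obtain ⟨heJ, heI⟩ := mem_sdiff.1 heJI
  refine ⟨I, hItr, e, heJI, hins, fun W hW heW w hw => ?_⟩
  obtain ⟨hwI, hwW⟩ := mem_inter.1 hw
  by_contra hwJ
  have hswap : insert e (I.erase w) ∩ J = insert e (I ∩ J) := by
    rw [insert_inter_of_mem heJ, erase_inter, erase_eq_of_notMem fun h => hwJ (mem_inter.1 h).2]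
  have hmem : insert e (I.erase w) ∈ univ.filter fun I : Finset α => Indep I ∧ IsTransversal P I :=
    mem_filter.2 ⟨mem_univ _, h_subset hins (insert_subset_insert e (erase_subset w I)),
      hItr.insert_erase hP.2.1 hW heW hwI hwW⟩
  have hle := hI_max _ hmem
  rw [hswap, card_insert_of_notMem fun h => heI (mem_inter.1 h).1] at hle
  omega

end Matroid

theorem submodular_split_le {α : Type*} [Fintype α] [DecidableEq α] {f : Finset α → ℝ}
    (hf : ∀ A B : Finset α, f (A ∪ B) + f (A ∩ B) ≤ f A + f B) (A W : Finset α) :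
    f (W ∩ A) + f (W \ A) - f W ≤ f A + f (univ \ A) - f univ := by
  have h₁ := hf A W
  have h₂ := hf (A ∪ W) (univ \ A)
  have hunion : A ∪ W ∪ univ \ A = univ := eq_univ_of_forall fun v => by
    by_cases v ∈ A <;> simp [*]
  have hinter : (A ∪ W) ∩ (univ \ A) = W \ A := by
    ext v
    simp only [mem_inter, mem_union, mem_sdiff, mem_univ, true_and]
    tauto
  rw [hunion, hinter] at h₂
  rw [inter_comm] at h₁
  linarith

theorem greedy_splitting_single_step_general
    (f : Finset V → ℝ)
    (h_submod : ∀ A B : Finset V, f (A ∪ B) + f (A ∩ B) ≤ f A + f B)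
    (Indep : Finset V → Prop)
    (h_subset : ∀ ⦃I J : Finset V⦄, Indep J → I ⊆ J → Indep I)
    (h_exchange : ∀ ⦃I J : Finset V⦄, Indep I → Indep J → I.card < J.card →
      ∃ e ∈ J \ I, Indep (insert e I))
    (i : ℕ) (hi : 2 ≤ i)
    (Q : Finset (Finset V)) (hQ : IsPartition Q) (hQcard : Q.card = i - 1)
    (hQtr : AdmitsTransversal Indep Q)
    (Vp : Fin i → Finset V)
    (h_disj : ∀ j j', j ≠ j' → Disjoint (Vp j) (Vp j'))
    (h_cover : ∀ v : V, ∃ j, v ∈ Vp j)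
    (hPtr : ∃ I : Finset V, Indep I ∧ ∀ j, (I ∩ Vp j).card = 1) :
    ∃ W ∈ Q, ∃ X : Finset V, X.Nonempty ∧ X ⊂ W ∧
      AdmitsTransversal Indep (insert X (insert (W \ X) (Q.erase W))) ∧
      ∃ j : Fin i, f X + f (W \ X) - f W ≤
        f (Vp j) + f (Finset.univ \ Vp j) - f Finset.univ := by
  obtain ⟨J, hJ, hJtr⟩ := hPtr
  have hJcard : J.card = i := by
    simpa using card_eq_of_forall_card_inter_eq_one (s := univ)
      (fun j _ j' _ hjj' => h_disj j j' hjj') (fun v => by simpa using h_cover v) fun j _ => hJtr j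
  obtain ⟨I, hItr, e, heJI, hins, hrep⟩ :=
    exists_transversal_exchange_of_card_lt h_subset h_exchange hQ hQtr hJ (by omega)
  obtain ⟨heJ, heI⟩ := mem_sdiff.1 heJI
  obtain ⟨W, hW, heW⟩ := hQ.exists_mem_s7 e
  obtain ⟨w, hIW⟩ := card_eq_one.1 (hItr W hW)
  have hwIW : w ∈ I ∩ W := hIW ▸ mem_singleton_self w
  obtain ⟨hwI, hwW⟩ := mem_inter.1 hwIW
  obtain ⟨j, hej⟩ := h_cover e
  have hwj : w ∉ Vp j := fun hwj =>
    heI (card_le_one.1 (hJtr j).le w (mem_inter.2 ⟨hrep W hW heW hwIW, hwj⟩)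
      e (mem_inter.2 ⟨heJ, hej⟩) ▸ hwI)
  have heX : e ∈ W ∩ Vp j := mem_inter.2 ⟨heW, hej⟩
  have hwX : w ∉ W ∩ Vp j := fun h => hwj (mem_inter.1 h).2
  refine ⟨W, hW, W ∩ Vp j, ⟨e, heX⟩, (ssubset_iff_of_subset inter_subset_left).2 ⟨w, hwW, hwX⟩,
    ⟨insert e I, hins, hItr.insert_split hQ.2.1 hW inter_subset_left heX hwI hwW hwX⟩, j, ?_⟩
  rw [sdiff_inter_self_left]
  exact submodular_split_le h_submod (Vp j) W

/-- one step of the greedy splitting analysis. Given a partition `Q` into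
`i - 1` parts admitting an independent transversal and a partition `V₁, …, Vᵢ` into
`i ≥ 2` parts admitting an independent transversal, some class `W ∈ Q` can be split into
nonempty parts `X, W \ X` so that the refined partition still admits an independent
transversal and the split cost is at most `f(Vⱼ) + f(V \ Vⱼ) - f(V)` for some `j`. -/
theorem greedy_splitting_single_step
    (f : Finset V → ℝ)
    (h_submod : ∀ A B : Finset V, f (A ∪ B) + f (A ∩ B) ≤ f A + f B)
    (h_empty_f : f ∅ = 0)
    (Indep : Finset V → Prop)
    (h_empty : Indep ∅)
    (h_subset : ∀ ⦃I J : Finset V⦄, Indep J → I ⊆ J → Indep I)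
    (h_exchange : ∀ ⦃I J : Finset V⦄, Indep I → Indep J → I.card < J.card →
      ∃ e ∈ J \ I, Indep (insert e I))
    (i : ℕ) (hi : 2 ≤ i)
    (Q : Finset (Finset V)) (hQ : IsPartition Q) (hQcard : Q.card = i - 1)
    (hQtr : AdmitsTransversal Indep Q)
    (Vp : Fin i → Finset V)
    (h_ne : ∀ j, (Vp j).Nonempty)
    (h_disj : ∀ j j', j ≠ j' → Disjoint (Vp j) (Vp j'))
    (h_cover : ∀ v : V, ∃ j, v ∈ Vp j)
    (hPtr : ∃ I : Finset V, Indep I ∧ ∀ j, (I ∩ Vp j).card = 1) :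
    ∃ W ∈ Q, ∃ X : Finset V, X.Nonempty ∧ X ⊂ W ∧
      AdmitsTransversal Indep (insert X (insert (W \ X) (Q.erase W))) ∧
      ∃ j : Fin i, f X + f (W \ X) - f W ≤
        f (Vp j) + f (Finset.univ \ Vp j) - f Finset.univ :=
  greedy_splitting_single_step_general f h_submod Indep h_subset h_exchange i hi Q hQ hQcard hQtr Vp
    h_disj h_cover hPtr
end
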